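/- arXiv:2312.00457 — 5 statements merged into one kernel-verified Lean document; each statement's English description precedes it below -/
import Mathlib

section
/- (Lemma 1(i)) In any Nash equilibrium s* = (x*, y*, g*), every player's equilibrium consumption of each public good is at least her isolation demand: x*_i + x̄_i(g*) ≥ x̂_i and y*_i + ȳ_i(g*) ≥ ŷ_i for all i ∈ N. -/
open Filter

noncomputable section

/-- `(x, y)` is an isolation demand for taste `t`: a maximizer of
`t·f(x) + (1−t)·f(y) − c·(x+y)` over nonnegative contributions. -/
def IsIsolationDemand (f : ℝ → ℝ) (c t x y : ℝ) : Prop :=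
  0 ≤ x ∧ 0 ≤ y ∧
  ∀ x' y' : ℝ, 0 ≤ x' → 0 ≤ y' →
    t * f x' + (1 - t) * f y' - c * (x' + y') ≤ t * f x + (1 - t) * f y - c * (x + y)

/-- Maintained assumptions on the benefit function `f`: twice continuously
differentiable, strictly increasing, strictly concave on `[0,∞)`, with
`lim_{z→0⁺} f′(z) > c` (possibly `+∞`, hence an `EReal` limit) and
`lim_{z→∞} f′(z) = m < c`. -/
def BenefitAssumptions (f : ℝ → ℝ) (c : ℝ) : Prop :=
  ContDiffOn ℝ 2 f (Set.Ici 0) ∧ StrictMonoOn f (Set.Ici 0) ∧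
  StrictConcaveOn ℝ (Set.Ici 0) f ∧
  (∃ L : EReal, Tendsto (fun z => Real.toEReal (deriv f z)) (nhdsWithin 0 (Set.Ioi 0)) (nhds L) ∧
    (c : EReal) < L) ∧
  (∃ m : ℝ, Tendsto (deriv f) atTop (nhds m) ∧ m < c)

/-- Spillovers of a good with contribution profile `x` received by `i`
through the links she sponsors in `g`. -/
def spill {n : ℕ} (x : Fin n → ℝ) (g : Fin n → Fin n → Bool) (i : Fin n) : ℝ :=
  ∑ j, if g i j then x j else 0

/-- Number of links sponsored by `i` (as a real number). -/
def nlinks {n : ℕ} (g : Fin n → Fin n → Bool) (i : Fin n) : ℝ :=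
  ∑ j, if g i j then (1 : ℝ) else 0

/-- Utility of player `i` under the strategy profile `(x, y, g)`. -/
def payoff {n : ℕ} (t : Fin n → ℝ) (f : ℝ → ℝ) (c k : ℝ)
    (x y : Fin n → ℝ) (g : Fin n → Fin n → Bool) (i : Fin n) : ℝ :=
  t i * f (x i + spill x g i) + (1 - t i) * f (y i + spill y g i)
    - c * (x i + y i) - nlinks g i * k

/-- Replace player `i`'s row of links by `gi`. -/
def updLinks {n : ℕ} (g : Fin n → Fin n → Bool) (i : Fin n) (gi : Fin n → Bool) :
    Fin n → Fin n → Bool :=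
  fun a b => if a = i then gi b else g a b

/-- Nash equilibrium: contributions are nonnegative, nobody links to herself,
and no player can strictly gain by simultaneously changing her own
contributions and links. -/
def NashEq {n : ℕ} (t : Fin n → ℝ) (f : ℝ → ℝ) (c k : ℝ)
    (x y : Fin n → ℝ) (g : Fin n → Fin n → Bool) : Prop :=
  (∀ i, 0 ≤ x i) ∧ (∀ i, 0 ≤ y i) ∧ (∀ i, g i i = false) ∧
  ∀ (i : Fin n) (xi yi : ℝ) (gi : Fin n → Bool), 0 ≤ xi → 0 ≤ yi → gi i = false →
    payoff t f c k (Function.update x i xi) (Function.update y i yi) (updLinks g i gi) i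
      ≤ payoff t f c k x y g i

/-- Assumptions on taste parameters: pairwise distinct, in `[0,1]`, and the
extreme types `0` and `1` are realized. -/
def TypeAssumptions {n : ℕ} (t : Fin n → ℝ) : Prop :=
  Function.Injective t ∧ (∀ i, t i ∈ Set.Icc (0:ℝ) 1) ∧ (∃ i, t i = 0) ∧ (∃ i, t i = 1)

/-- `i` is a large contributor in `g`: she receives at least one link. -/
def isContributor {n : ℕ} (g : Fin n → Fin n → Bool) (i : Fin n) : Prop :=
  ∃ j, g j i = true

/-- `i` is isolated in `g`: she neither sponsors nor receives links. -/
def isIsolated {n : ℕ} (g : Fin n → Fin n → Bool) (i : Fin n) : Prop :=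
  (∀ j, g i j = false) ∧ (∀ j, g j i = false)

lemma key_concave (f : ℝ → ℝ) (hcc : StrictConcaveOn ℝ (Set.Ici 0) f) (c t' zhat z0 : ℝ)
    (hc : 0 < c) (ht : 0 ≤ t') (hzhat : 0 ≤ zhat) (hz0 : 0 ≤ z0)
    (hmax : ∀ z, 0 ≤ z → t' * f z - c * z ≤ t' * f zhat - c * zhat)
    (hle : t' * f zhat - c * zhat ≤ t' * f z0 - c * z0) :
    zhat ≤ z0 := by
  by_contra hcon
  push_neg at hcon
  rcases eq_or_lt_of_le ht with ht0 | ht0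
  · have h0 := hmax 0 le_rfl
    rw [← ht0] at h0
    simp at h0
    nlinarith
  · have hne : z0 ≠ zhat := ne_of_lt hcon
    have hmid := hcc.2 (Set.mem_Ici.mpr hz0) (Set.mem_Ici.mpr hzhat) hne
      (by norm_num : (0:ℝ) < 1/2) (by norm_num : (0:ℝ) < 1/2) (by norm_num)
    simp only [smul_eq_mul] at hmid
    have hw : (0:ℝ) ≤ 1/2 * z0 + 1/2 * zhat := by linarith
    have h1 := hmax _ hw
    have h2 := hmax z0 hz0
    nlinarith [mul_lt_mul_of_pos_left hmid ht0]

/-- Lemma 1(i): in any Nash equilibrium every player consumes at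
least her isolation demand of each good. -/
theorem statement1 {n : ℕ} (hn : 3 ≤ n)
    (t : Fin n → ℝ) (hT : TypeAssumptions t)
    (f : ℝ → ℝ) (c k : ℝ) (hc : 0 < c) (hk : 0 < k)
    (hB : BenefitAssumptions f c)
    (x y : Fin n → ℝ) (g : Fin n → Fin n → Bool)
    (hNE : NashEq t f c k x y g)
    (xhat yhat : Fin n → ℝ)
    (hdem : ∀ i, IsIsolationDemand f c (t i) (xhat i) (yhat i)) :
    ∀ i, xhat i ≤ x i + spill x g i ∧ yhat i ≤ y i + spill y g i := by
  obtain ⟨hx0, hy0, hgii, hdev⟩ := hNE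
  intro i
  have hSx : 0 ≤ spill x g i := by
    apply Finset.sum_nonneg; intro j _
    by_cases h : g i j <;> simp [h, hx0 j]
  have hSy : 0 ≤ spill y g i := by
    apply Finset.sum_nonneg; intro j _
    by_cases h : g i j <;> simp [h, hy0 j]
  have hgupd : updLinks g i (g i) = g := by
    funext a b; unfold updLinks; split_ifs with h
    · subst h; rfl
    · rfl
  have hcc := hB.2.2.1
  constructor
  · -- x part
    by_contra hcon
    push_neg at hcon
    set S := spill x g i with hSdef
    have hxi' : 0 ≤ xhat i - S := by linarith [hx0 i]
    have hspx : spill (Function.update x i (xhat i - S)) g i = S := by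
      unfold spill
      apply Finset.sum_congr rfl
      intro j _
      by_cases hj : j = i
      · subst hj; simp [hgii j]
      · simp [Function.update_of_ne hj]
    have hdevi := hdev i (xhat i - S) (y i) (g i) hxi' (hy0 i) (hgii i)
    rw [hgupd, Function.update_eq_self] at hdevi
    unfold payoff at hdevi
    rw [hspx, Function.update_self] at hdevi
    have hle : t i * f (xhat i) - c * xhat i ≤ t i * f (x i + S) - c * (x i + S) := by
      have heq : xhat i - S + S = xhat i := by ring
      rw [heq] at hdevi
      linarith
    have hmax : ∀ z, 0 ≤ z → t i * f z - c * z ≤ t i * f (xhat i) - c * xhat i := by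
      intro z hz
      have := (hdem i).2.2 z (yhat i) hz (hdem i).2.1
      linarith
    have := key_concave f hcc c (t i) (xhat i) (x i + S) hc ((hT.2.1 i).1)
      (hdem i).1 (by linarith [hx0 i]) hmax hle
    linarith
  · -- y part
    by_contra hcon
    push_neg at hcon
    set S := spill y g i with hSdef
    have hyi' : 0 ≤ yhat i - S := by linarith [hy0 i]
    have hspy : spill (Function.update y i (yhat i - S)) g i = S := by
      unfold spill
      apply Finset.sum_congr rfl
      intro j _
      by_cases hj : j = i
      · subst hj; simp [hgii j]
      · simp [Function.update_of_ne hj]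
    have hdevi := hdev i (x i) (yhat i - S) (g i) (hx0 i) hyi' (hgii i)
    rw [hgupd, Function.update_eq_self] at hdevi
    unfold payoff at hdevi
    rw [hspy, Function.update_self] at hdevi
    have hle : (1 - t i) * f (yhat i) - c * yhat i ≤ (1 - t i) * f (y i + S) - c * (y i + S) := by
      have heq : yhat i - S + S = yhat i := by ring
      rw [heq] at hdevi
      linarith
    have hmax : ∀ z, 0 ≤ z → (1 - t i) * f z - c * z ≤ (1 - t i) * f (yhat i) - c * yhat i := by
      intro z hz
      have := (hdem i).2.2 (xhat i) z (hdem i).1 hz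
      linarith
    have := key_concave f hcc c (1 - t i) (yhat i) (y i + S) hc
      (by linarith [(hT.2.1 i).2]) (hdem i).2.1 (by linarith [hy0 i]) hmax hle
    linarith
end
end

section
/- Define k̃ = max over ordered pairs of distinct players (i, j) of [ c·(min{x̂_i, x̂_j} + min{ŷ_i, ŷ_j}) + t_i·max{f(x̂_j) − f(x̂_i), 0} + (1−t_i)·max{f(ŷ_j) − f(ŷ_i), 0} ], the largest gain any player can obtain from a single link when everyone plays her isolation bundle. If k > k̃, then the game has a unique Nash equilibrium: the empty network with every player contributing her isolation demands, (x*_i, y*_i) = (x̂_i, ŷ_i) for all i and g*_{ij} = 0 for all i ≠ j. -/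
/-!
Facing a free spillover `p` of a good she weighs by `a` (`t` or `1 - t`), a player's best own
contribution is `max (x̂ - p) 0`, and her gain over isolation, `a (f (max p x̂) - f x̂) + c min p x̂`,
is subadditive in `p` by concavity of `f`. So when every neighbour contributes at most her
isolation demand, each link adds at most its single-link gain, which is `≤ k̃ < k`: every link is
a strict net loss. In an equilibrium nobody contributes more than her isolation demand (more would
be wasted against any spillover), hence nobody links, and without links best responses are the
isolation demands.
-/

open Filter

noncomputable section

/-- The gains player `i` (with taste `ti` and isolation demand `(xi, yi)`)
obtains from a single link to player `j` providing her isolation bundle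
`(xj, yj)`, gross of the linking cost. -/
def linkGain (f : ℝ → ℝ) (c ti xi yi xj yj : ℝ) : ℝ :=
  c * (min xi xj + min yi yj) + ti * max (f xj - f xi) 0
    + (1 - ti) * max (f yj - f yi) 0

open Set

lemma ConcaveOn.add_sub_le_add_sub_of_le {s : Set ℝ} {f : ℝ → ℝ} (hf : ConcaveOn ℝ s f)
    {a b d : ℝ} (hb : b ∈ s) (had : a + d ∈ s) (hba : b ≤ a) (hd : 0 ≤ d) :
    f (a + d) - f a ≤ f (b + d) - f b := by
  rcases hd.eq_or_lt with rfl | hd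
  · simp
  -- `a` and `b + d` are mirror-image convex combinations of the endpoints `b` and `a + d`
  have hpos : 0 < a + d - b := by linarith
  set lam := d / (a + d - b)
  have hlam : lam * (a + d - b) = d := div_mul_cancel₀ _ hpos.ne'
  have h0 : 0 ≤ lam := by positivity
  have h1 : 0 ≤ 1 - lam := sub_nonneg.2 ((div_le_one hpos).2 (by linarith))
  have e1 := hf.2 hb had h0 h1 (add_sub_cancel _ _)
  have e2 := hf.2 hb had h1 h0 (sub_add_cancel _ _)
  simp only [smul_eq_mul] at e1 e2
  rw [show lam * b + (1 - lam) * (a + d) = a by linear_combination -hlam] at e1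
  rw [show (1 - lam) * b + lam * (a + d) = b + d by linear_combination hlam] at e2
  linarith

lemma ConcaveOn.strictAntiOn_of_forall_lt {s : Set ℝ} {φ : ℝ → ℝ} (hφ : ConcaveOn ℝ s φ)
    {xh : ℝ} (hxh : xh ∈ s) (hlt : ∀ v ∈ s, v ≠ xh → φ v < φ xh) :
    StrictAntiOn φ (s ∩ Ici xh) := by
  intro u hu v hv huv
  rcases (show xh ≤ u from hu.2).eq_or_lt with rfl | hxu
  · exact hlt v hv.1 huv.ne'
  · exact hφ.strictAntiOn hxh hxu (hlt u hu.1 hxu.ne') ⟨hu.1, self_mem_Ici⟩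
      ⟨hv.1, mem_Ici.2 huv.le⟩ huv

lemma eq_max_sub_of_forall_le {φ : ℝ → ℝ} (hφ : ConcaveOn ℝ (Ici 0) φ) {xh : ℝ} (hxh : 0 ≤ xh)
    (hlt : ∀ v, 0 ≤ v → v ≠ xh → φ v < φ xh) {X w : ℝ} (hX : 0 ≤ X) (hw : 0 ≤ w)
    (hbest : ∀ w', 0 ≤ w' → φ (w' + X) ≤ φ (w + X)) :
    w = max (xh - X) 0 := by
  rcases le_total X xh with hXx | hxX
  · rw [max_eq_left (sub_nonneg.2 hXx)]
    by_contra hne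
    have hopt := hbest (xh - X) (sub_nonneg.2 hXx)
    rw [sub_add_cancel] at hopt
    exact (hlt (w + X) (by positivity) fun h => hne (by linarith)).not_ge hopt
  · rw [max_eq_right (sub_nonpos.2 hxX)]
    by_contra hne
    have hopt := hbest 0 le_rfl
    rw [zero_add] at hopt
    have hanti := hφ.strictAntiOn_of_forall_lt (mem_Ici.2 hxh) fun v hv => hlt v hv
    exact (hanti ⟨mem_Ici.2 hX, hxX⟩ ⟨mem_Ici.2 (by positivity), mem_Ici.2 (by linarith)⟩
      (lt_add_of_pos_left X (lt_of_le_of_ne hw (Ne.symm hne)))).not_ge hopt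

section OneGood

variable {f : ℝ → ℝ} {c a xh : ℝ}

lemma concaveOn_mul_sub_mul (hf : ConcaveOn ℝ (Ici 0) f) (ha : 0 ≤ a) (hc : 0 ≤ c) :
    ConcaveOn ℝ (Ici 0) (fun z => a * f z - c * z) :=
  (hf.smul ha).sub ((convexOn_id (convex_Ici 0)).smul hc)

lemma mul_sub_mul_lt_of_isMaxOn (hf : StrictConcaveOn ℝ (Ici 0) f) (ha : 0 ≤ a) (hc : 0 < c)
    (hxh : 0 ≤ xh) (hmax : IsMaxOn (fun z => a * f z - c * z) (Ici 0) xh)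
    {v : ℝ} (hv : 0 ≤ v) (hne : v ≠ xh) :
    a * f v - c * v < a * f xh - c * xh := by
  rcases ha.eq_or_lt with rfl | ha
  · have h0 : c * xh ≤ 0 := by simpa using hmax (mem_Ici.2 le_rfl)
    have hxh0 : xh = 0 := le_antisymm (by nlinarith) hxh
    subst hxh0
    have : 0 < c * v := mul_pos hc (lt_of_le_of_ne hv (Ne.symm hne))
    simp only [zero_mul, mul_zero]
    linarith
  · have hsc : StrictConcaveOn ℝ (Ici 0) (fun z => a * f z - c * z) := by
      refine StrictConcaveOn.sub_convexOn ⟨hf.1, fun x hx y hy hxy p q hp hq hpq => ?_⟩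
        ((convexOn_id (convex_Ici 0)).smul hc.le)
      have := mul_lt_mul_of_pos_left (hf.2 hx hy hxy hp hq hpq) ha
      simp only [smul_eq_mul] at this ⊢
      linarith
    refine lt_of_le_of_ne (hmax hv) fun h => hne (hsc.eq_of_isMaxOn ?_ hmax hv hxh)
    exact fun z hz => (hmax hz).trans h.ge

/-- `V p - V 0`, where `V p = max_{z ≥ 0} (a f (z + p) - c z)` is the value of a good of which `p`
is received for free (attained at `z = max (xh - p) 0`). -/
def spilloverGain (f : ℝ → ℝ) (c a xh p : ℝ) : ℝ :=
  a * (f (max p xh) - f xh) + c * min p xh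

lemma le_add_spilloverGain (hf : ConcaveOn ℝ (Ici 0) f) (ha : 0 ≤ a) (hxh : 0 ≤ xh)
    (hmax : IsMaxOn (fun z => a * f z - c * z) (Ici 0) xh) {z p : ℝ} (hz : 0 ≤ z) (hp : 0 ≤ p) :
    a * f (z + p) - c * z ≤ a * f xh - c * xh + spilloverGain f c a xh p := by
  rcases le_total p xh with hpx | hxp
  · have : a * f (z + p) - c * (z + p) ≤ a * f xh - c * xh := hmax (mem_Ici.2 (by positivity))
    simp only [spilloverGain, max_eq_right hpx, min_eq_left hpx, sub_self, mul_zero]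
    linarith
  · have hshift : f (z + p) - f p ≤ f (z + xh) - f xh := by
      simpa only [add_comm z] using
        hf.add_sub_le_add_sub_of_le hxh (mem_Ici.2 (by positivity)) hxp hz
    have : a * f (z + xh) - c * (z + xh) ≤ a * f xh - c * xh := hmax (mem_Ici.2 (by positivity))
    simp only [spilloverGain, max_eq_left hxp, min_eq_right hxp]
    nlinarith [mul_le_mul_of_nonneg_left hshift ha]

lemma spilloverGain_le_mul (hmax : IsMaxOn (fun z => a * f z - c * z) (Ici 0) xh) {p : ℝ}
    (hp : 0 ≤ p) : spilloverGain f c a xh p ≤ c * p := by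
  rcases le_total p xh with hpx | hxp
  · simp [spilloverGain, max_eq_right hpx, min_eq_left hpx]
  · have : a * f p - c * p ≤ a * f xh - c * xh := hmax (mem_Ici.2 hp)
    simp only [spilloverGain, max_eq_left hxp, min_eq_right hxp]
    linarith

lemma spilloverGain_add_le (hf : ConcaveOn ℝ (Ici 0) f) (ha : 0 ≤ a) (hxh : 0 ≤ xh)
    (hmax : IsMaxOn (fun z => a * f z - c * z) (Ici 0) xh) {p q : ℝ} (hp : 0 ≤ p) (hq : 0 ≤ q) :
    spilloverGain f c a xh (p + q) ≤ spilloverGain f c a xh p + spilloverGain f c a xh q := by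
  wlog hqp : q ≤ p generalizing p q
  · simpa only [add_comm] using this hq hp (le_of_not_ge hqp)
  rcases le_total xh p with hxp | hpx
  · -- past `xh` the increment is `a (f (p + q) - f p) ≤ a (f (xh + q) - f xh)`, the gain of `q`
    have hshift : f (p + q) - f p ≤ f (xh + q) - f xh :=
      hf.add_sub_le_add_sub_of_le (mem_Ici.2 hxh) (mem_Ici.2 (by positivity)) hxp hq
    have := le_add_spilloverGain hf ha hxh hmax hxh hq
    have hxpq : xh ≤ p + q := by linarith
    simp only [spilloverGain, max_eq_left hxp, min_eq_right hxp, max_eq_left hxpq,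
      min_eq_right hxpq] at this ⊢
    nlinarith [mul_le_mul_of_nonneg_left hshift ha]
  · have := spilloverGain_le_mul hmax (add_nonneg hp hq)
    simp only [spilloverGain, max_eq_right hpx, min_eq_left hpx, max_eq_right (hqp.trans hpx),
      min_eq_left (hqp.trans hpx), sub_self, mul_zero, zero_add] at this ⊢
    linarith

lemma spilloverGain_le (ha : 0 ≤ a) (p : ℝ) :
    spilloverGain f c a xh p ≤ c * min xh p + a * max (f p - f xh) 0 := by
  rw [spilloverGain, min_comm, add_comm]
  gcongr
  rcases le_total p xh with hpx | hxp
  · simp [max_eq_right hpx]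
  · simp [max_eq_left hxp]

lemma mul_apply_add_sum_sub_mul_le (hf : ConcaveOn ℝ (Ici 0) f) (ha : 0 ≤ a) (hxh : 0 ≤ xh)
    (hmax : IsMaxOn (fun z => a * f z - c * z) (Ici 0) xh) {ι : Type*} (S : Finset ι)
    {b : ι → ℝ} (hb : ∀ j ∈ S, 0 ≤ b j) {z : ℝ} (hz : 0 ≤ z) :
    a * f (z + ∑ j ∈ S, b j) - c * z ≤
      a * f xh - c * xh + ∑ j ∈ S, (c * min xh (b j) + a * max (f (b j) - f xh) 0) := by
  have hsub : spilloverGain f c a xh (∑ j ∈ S, b j) ≤ ∑ j ∈ S, spilloverGain f c a xh (b j) :=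
    Finset.le_sum_of_subadditive_on_pred _ (fun p => 0 ≤ p)
      (by simp [spilloverGain, max_eq_right hxh, min_eq_left hxh])
      (fun p q hp hq => spilloverGain_add_le hf ha hxh hmax hp hq) (fun _ _ => add_nonneg) b hb
  have := le_add_spilloverGain hf ha hxh hmax hz (Finset.sum_nonneg hb)
  have := Finset.sum_le_sum fun j (_ : j ∈ S) =>
    spilloverGain_le (f := f) (c := c) (xh := xh) ha (b j)
  linarith

end OneGood

lemma IsIsolationDemand.isMaxOn_left {f : ℝ → ℝ} {c t x y : ℝ}
    (h : IsIsolationDemand f c t x y) :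
    IsMaxOn (fun z => t * f z - c * z) (Ici 0) x := fun z hz => by
  have := h.2.2 z y hz h.2.1
  show t * f z - c * z ≤ t * f x - c * x
  linarith

lemma IsIsolationDemand.isMaxOn_right {f : ℝ → ℝ} {c t x y : ℝ}
    (h : IsIsolationDemand f c t x y) :
    IsMaxOn (fun z => (1 - t) * f z - c * z) (Ici 0) y := fun z hz => by
  have := h.2.2 x z h.1 hz
  show (1 - t) * f z - c * z ≤ (1 - t) * f y - c * y
  linarith

lemma benefit_le_add_sum_linkGain {f : ℝ → ℝ} {c t xh yh : ℝ} (hf : ConcaveOn ℝ (Ici 0) f)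
    (hmono : MonotoneOn f (Ici 0)) (ht : t ∈ Icc 0 1) (hdem : IsIsolationDemand f c t xh yh)
    {ι : Type*} (S : Finset ι) {xs ys xhs yhs : ι → ℝ} (hxs : ∀ j ∈ S, xs j ∈ Icc 0 (xhs j))
    (hys : ∀ j ∈ S, ys j ∈ Icc 0 (yhs j)) {xi yi : ℝ} (hxi : 0 ≤ xi) (hyi : 0 ≤ yi) :
    t * f (xi + ∑ j ∈ S, xs j) + (1 - t) * f (yi + ∑ j ∈ S, ys j) - c * (xi + yi) ≤
      t * f xh + (1 - t) * f yh - c * (xh + yh) +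
        ∑ j ∈ S, linkGain f c t xh yh (xhs j) (yhs j) := by
  have ht1 : 0 ≤ 1 - t := sub_nonneg.2 ht.2
  have hxhs : ∀ j ∈ S, 0 ≤ xhs j := fun j hj => (hxs j hj).1.trans (hxs j hj).2
  have hyhs : ∀ j ∈ S, 0 ≤ yhs j := fun j hj => (hys j hj).1.trans (hys j hj).2
  have hmx : f (xi + ∑ j ∈ S, xs j) ≤ f (xi + ∑ j ∈ S, xhs j) :=
    hmono (mem_Ici.2 (add_nonneg hxi (Finset.sum_nonneg fun j hj => (hxs j hj).1)))
      (mem_Ici.2 (add_nonneg hxi (Finset.sum_nonneg hxhs)))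
      (by gcongr with j hj; exact (hxs j hj).2)
  have hmy : f (yi + ∑ j ∈ S, ys j) ≤ f (yi + ∑ j ∈ S, yhs j) :=
    hmono (mem_Ici.2 (add_nonneg hyi (Finset.sum_nonneg fun j hj => (hys j hj).1)))
      (mem_Ici.2 (add_nonneg hyi (Finset.sum_nonneg hyhs)))
      (by gcongr with j hj; exact (hys j hj).2)
  have hx := mul_apply_add_sum_sub_mul_le hf ht.1 hdem.1 hdem.isMaxOn_left S hxhs hxi
  have hy := mul_apply_add_sum_sub_mul_le hf ht1 hdem.2.1 hdem.isMaxOn_right S hyhs hyi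
  have hsum : ∑ j ∈ S, linkGain f c t xh yh (xhs j) (yhs j) =
      ∑ j ∈ S, (c * min xh (xhs j) + t * max (f (xhs j) - f xh) 0) +
        ∑ j ∈ S, (c * min yh (yhs j) + (1 - t) * max (f (yhs j) - f yh) 0) := by
    rw [← Finset.sum_add_distrib]
    exact Finset.sum_congr rfl fun j _ => by rw [linkGain]; ring
  nlinarith [mul_le_mul_of_nonneg_left hmx ht.1, mul_le_mul_of_nonneg_left hmy ht1]

section Game

variable {n : ℕ} {t : Fin n → ℝ} {f : ℝ → ℝ} {c k : ℝ} {x y xhat yhat : Fin n → ℝ}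
  {g : Fin n → Fin n → Bool} {i : Fin n}

lemma spill_eq_sum : spill x g i = ∑ j ∈ {j | g i j = true}, x j := by
  rw [Finset.sum_filter]
  rfl

lemma nlinks_eq_card : nlinks g i = ({j | g i j = true} : Finset (Fin n)).card := by
  rw [nlinks, Finset.sum_boole]

lemma spill_nonneg (hx : ∀ j, 0 ≤ x j) : 0 ≤ spill x g i :=
  Finset.sum_nonneg fun j _ => by split <;> simp [hx j]

lemma spill_of_forall_eq_false (h : ∀ j, g i j = false) : spill x g i = 0 := by
  simp [spill, h]

lemma payoff_of_forall_eq_false (h : ∀ j, g i j = false) :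
    payoff t f c k x y g i = t i * f (x i) + (1 - t i) * f (y i) - c * (x i + y i) := by
  simp [payoff, spill, nlinks, h]

lemma spill_update_self (h : g i i = false) (w : ℝ) :
    spill (Function.update x i w) g i = spill x g i :=
  Finset.sum_congr rfl fun j _ => by
    rcases eq_or_ne j i with rfl | hj
    · simp [h]
    · simp [Function.update_of_ne hj]

lemma updLinks_self : updLinks g i (g i) = g := by
  funext a b
  by_cases ha : a = i <;> simp [updLinks, ha]

lemma payoff_add_mul_nlinks_le (hf : ConcaveOn ℝ (Ici 0) f) (hmono : MonotoneOn f (Ici 0))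
    (ht : t i ∈ Icc 0 1) (hdem : IsIsolationDemand f c (t i) (xhat i) (yhat i)) {ktilde : ℝ}
    (hub : ∀ j, i ≠ j → linkGain f c (t i) (xhat i) (yhat i) (xhat j) (yhat j) ≤ ktilde)
    (hgi : g i i = false) (hxi : 0 ≤ x i) (hyi : 0 ≤ y i)
    (hx : ∀ j, g i j = true → x j ∈ Icc 0 (xhat j))
    (hy : ∀ j, g i j = true → y j ∈ Icc 0 (yhat j)) :
    payoff t f c k x y g i + (k - ktilde) * nlinks g i ≤
      t i * f (xhat i) + (1 - t i) * f (yhat i) - c * (xhat i + yhat i) := by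
  set S : Finset (Fin n) := {j | g i j = true}
  have hS : ∀ j ∈ S, g i j = true := fun j hj => (Finset.mem_filter.1 hj).2
  have hbenefit := benefit_le_add_sum_linkGain hf hmono ht hdem S
    (fun j hj => hx j (hS j hj)) (fun j hj => hy j (hS j hj)) hxi hyi
  have hgain :
      ∑ j ∈ S, linkGain f c (t i) (xhat i) (yhat i) (xhat j) (yhat j) ≤ S.card * ktilde := by
    simpa using Finset.sum_le_sum fun j hj =>
      hub j (ne_of_apply_ne (g i) (by rw [hgi, hS j hj]; decide))
  rw [payoff, spill_eq_sum, spill_eq_sum, nlinks_eq_card]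
  linarith

lemma payoff_update_updLinks_eq_false (xi yi : ℝ) :
    payoff t f c k (Function.update x i xi) (Function.update y i yi)
      (updLinks g i fun _ => false) i = t i * f xi + (1 - t i) * f yi - c * (xi + yi) := by
  rw [payoff_of_forall_eq_false fun j => by simp [updLinks]]
  simp

namespace NashEq

lemma left_le (hN : NashEq t f c k x y g) (i : Fin n) {w : ℝ} (hw : 0 ≤ w) :
    t i * f (w + spill x g i) - c * w ≤ t i * f (x i + spill x g i) - c * x i := by
  have := hN.2.2.2 i w (y i) (g i) hw (hN.2.1 i) (hN.2.2.1 i)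
  rw [Function.update_eq_self, updLinks_self] at this
  simp only [payoff, spill_update_self (hN.2.2.1 i), Function.update_self] at this
  linarith

lemma right_le (hN : NashEq t f c k x y g) (i : Fin n) {w : ℝ} (hw : 0 ≤ w) :
    (1 - t i) * f (w + spill y g i) - c * w ≤ (1 - t i) * f (y i + spill y g i) - c * y i := by
  have := hN.2.2.2 i (x i) w (g i) (hN.1 i) hw (hN.2.2.1 i)
  rw [Function.update_eq_self, updLinks_self] at this
  simp only [payoff, spill_update_self (hN.2.2.1 i), Function.update_self] at this
  linarith

lemma left_eq_max (hN : NashEq t f c k x y g) (hf : StrictConcaveOn ℝ (Ici 0) f) (hc : 0 < c)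
    (ht : 0 ≤ t i) (hdem : IsIsolationDemand f c (t i) (xhat i) (yhat i)) :
    x i = max (xhat i - spill x g i) 0 :=
  eq_max_sub_of_forall_le (concaveOn_mul_sub_mul hf.concaveOn ht hc.le) hdem.1
    (fun _ hv hne => mul_sub_mul_lt_of_isMaxOn hf ht hc hdem.1 hdem.isMaxOn_left hv hne)
    (spill_nonneg hN.1) (hN.1 i) fun w hw => by
      have := hN.left_le i hw
      linarith

lemma right_eq_max (hN : NashEq t f c k x y g) (hf : StrictConcaveOn ℝ (Ici 0) f) (hc : 0 < c)
    (ht : t i ≤ 1) (hdem : IsIsolationDemand f c (t i) (xhat i) (yhat i)) :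
    y i = max (yhat i - spill y g i) 0 :=
  eq_max_sub_of_forall_le (concaveOn_mul_sub_mul hf.concaveOn (sub_nonneg.2 ht) hc.le) hdem.2.1
    (fun _ hv hne =>
      mul_sub_mul_lt_of_isMaxOn hf (sub_nonneg.2 ht) hc hdem.2.1 hdem.isMaxOn_right hv hne)
    (spill_nonneg hN.2.1) (hN.2.1 i) fun w hw => by
      have := hN.right_le i hw
      linarith

lemma links_eq_false (hN : NashEq t f c k x y g) (hf : ConcaveOn ℝ (Ici 0) f)
    (hmono : MonotoneOn f (Ici 0)) (ht : t i ∈ Icc 0 1)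
    (hdem : IsIsolationDemand f c (t i) (xhat i) (yhat i)) {ktilde : ℝ}
    (hub : ∀ j, i ≠ j → linkGain f c (t i) (xhat i) (yhat i) (xhat j) (yhat j) ≤ ktilde)
    (hkk : ktilde < k) (hx : ∀ j, x j ≤ xhat j) (hy : ∀ j, y j ≤ yhat j) (j : Fin n) :
    g i j = false := by
  by_contra hij
  have hdev := hN.2.2.2 i (xhat i) (yhat i) (fun _ => false) hdem.1 hdem.2.1 rfl
  rw [payoff_update_updLinks_eq_false] at hdev
  have hbound := payoff_add_mul_nlinks_le (k := k) hf hmono ht hdem hub (hN.2.2.1 i) (hN.1 i)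
    (hN.2.1 i) (fun j _ => ⟨hN.1 j, hx j⟩) (fun j _ => ⟨hN.2.1 j, hy j⟩)
  have hlink : 1 ≤ nlinks g i := by
    rw [nlinks_eq_card]
    exact_mod_cast Finset.card_pos.2 ⟨j, by simpa using hij⟩
  nlinarith

end NashEq

lemma nashEq_isolation (hf : ConcaveOn ℝ (Ici 0) f) (hmono : MonotoneOn f (Ici 0))
    (ht : ∀ i, t i ∈ Icc 0 1) (hdem : ∀ i, IsIsolationDemand f c (t i) (xhat i) (yhat i))
    {ktilde : ℝ}
    (hub : ∀ i j, i ≠ j → linkGain f c (t i) (xhat i) (yhat i) (xhat j) (yhat j) ≤ ktilde)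
    (hkk : ktilde < k) :
    NashEq t f c k xhat yhat (fun _ _ => false) := by
  refine ⟨fun i => (hdem i).1, fun i => (hdem i).2.1, fun _ => rfl, ?_⟩
  intro i xi yi gi hxi hyi hgi
  have hneighbour : ∀ j, updLinks (fun _ _ => false) i gi i j = true → j ≠ i :=
    fun j hj hji => by simp [updLinks, hji, hgi] at hj
  have hbound := payoff_add_mul_nlinks_le (x := Function.update xhat i xi)
    (y := Function.update yhat i yi) (g := updLinks (fun _ _ => false) i gi) (k := k)
    hf hmono (ht i) (hdem i) (hub i) (by simpa [updLinks] using hgi) (by simpa using hxi)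
    (by simpa using hyi)
    (fun j hj => by simpa [Function.update_of_ne (hneighbour j hj)] using (hdem j).1)
    (fun j hj => by simpa [Function.update_of_ne (hneighbour j hj)] using (hdem j).2.1)
  have hlinks : 0 ≤ nlinks (updLinks (fun _ _ => false) i gi) i := by
    rw [nlinks_eq_card]
    positivity
  rw [payoff_of_forall_eq_false (g := fun _ _ => false) fun _ => rfl]
  nlinarith

end Game

theorem statement10_general {n : ℕ}
    (t : Fin n → ℝ) (hT : TypeAssumptions t)
    (f : ℝ → ℝ) (c k : ℝ) (hc : 0 < c)
    (hB : BenefitAssumptions f c)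
    (xhat yhat : Fin n → ℝ)
    (hdem : ∀ i, IsIsolationDemand f c (t i) (xhat i) (yhat i))
    (ktilde : ℝ)
    (hub : ∀ i j : Fin n, i ≠ j →
      linkGain f c (t i) (xhat i) (yhat i) (xhat j) (yhat j) ≤ ktilde)
    (hkk : ktilde < k) :
    NashEq t f c k xhat yhat (fun _ _ => false) ∧
    ∀ (x y : Fin n → ℝ) (g : Fin n → Fin n → Bool),
      NashEq t f c k x y g →
        x = xhat ∧ y = yhat ∧ ∀ i j, g i j = false := by
  obtain ⟨-, hmono, hsc, -, -⟩ := hB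
  have ht : ∀ i, t i ∈ Icc 0 1 := hT.2.1
  refine ⟨nashEq_isolation hsc.concaveOn hmono.monotoneOn ht hdem hub hkk, fun x y g hN => ?_⟩
  have hx : ∀ i, x i ≤ xhat i := fun i =>
    (hN.left_eq_max hsc hc (ht i).1 (hdem i)).trans_le
      (max_le (by linarith [spill_nonneg (g := g) (i := i) hN.1]) (hdem i).1)
  have hy : ∀ i, y i ≤ yhat i := fun i =>
    (hN.right_eq_max hsc hc (ht i).2 (hdem i)).trans_le
      (max_le (by linarith [spill_nonneg (g := g) (i := i) hN.2.1]) (hdem i).2.1)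
  have hg : ∀ i j, g i j = false := fun i =>
    hN.links_eq_false hsc.concaveOn hmono.monotoneOn (ht i) (hdem i) (hub i) hkk hx hy
  refine ⟨funext fun i => ?_, funext fun i => ?_, hg⟩
  · rw [hN.left_eq_max hsc hc (ht i).1 (hdem i), spill_of_forall_eq_false (hg i), sub_zero,
      max_eq_left (hdem i).1]
  · rw [hN.right_eq_max hsc hc (ht i).2 (hdem i), spill_of_forall_eq_false (hg i), sub_zero,
      max_eq_left (hdem i).2.1]

/-- if `k` exceeds the largest gain `k̃` from any single link at
the isolation profile, the unique Nash equilibrium is the empty network with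
everyone at her isolation demand. -/
theorem statement10 {n : ℕ} (hn : 3 ≤ n)
    (t : Fin n → ℝ) (hT : TypeAssumptions t)
    (f : ℝ → ℝ) (c k : ℝ) (hc : 0 < c) (hk : 0 < k)
    (hB : BenefitAssumptions f c)
    (xhat yhat : Fin n → ℝ)
    (hdem : ∀ i, IsIsolationDemand f c (t i) (xhat i) (yhat i))
    (ktilde : ℝ)
    (hub : ∀ i j : Fin n, i ≠ j →
      linkGain f c (t i) (xhat i) (yhat i) (xhat j) (yhat j) ≤ ktilde)
    (hatt : ∃ i j : Fin n, i ≠ j ∧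
      linkGain f c (t i) (xhat i) (yhat i) (xhat j) (yhat j) = ktilde)
    (hkk : ktilde < k) :
    NashEq t f c k xhat yhat (fun _ _ => false) ∧
    ∀ (x y : Fin n → ℝ) (g : Fin n → Fin n → Bool),
      NashEq t f c k x y g →
        x = xhat ∧ y = yhat ∧ ∀ i j, g i j = false :=
  statement10_general t hT f c k hc hB xhat yhat hdem ktilde hub hkk
end
end

section
/- Define k̃ = max over ordered pairs of distinct players (i, j) of [ c·(min{x̂_i, x̂_j} + min{ŷ_i, ŷ_j}) + t_i·max{f(x̂_j) − f(x̂_i), 0} + (1−t_i)·max{f(ŷ_j) − f(ŷ_i), 0} ]. If k ≤ k̃, then there exists an independent Nash equilibrium, i.e., a Nash equilibrium s* = (x*, y*, g*) in which no large contributor sponsors any link: g*_{ij} = 0 for all i ∈ C(g*) and all j. -/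
open Filter

noncomputable section

open Finset Set Function

/-!
A player with weight `u` on a good and isolation demand `d` who receives spillovers `s` of it
best-responds with `max (d - s) 0`, and her gain over isolation is
`c s + φ (max d s) - φ d` with `φ X = u f X - c X`. Since `φ` is concave and maximal at `d`, this
gain is subadditive in `s`, so the value of a set of links is at most the sum of single-link
values.

Single-link gains have an interval property with respect to tastes: a player whose taste lies
between another player's and the target's gains at least as much from the target. Removing the
player of lowest taste together with everyone tempted by her, induction gives a kernel: a set of
players, containing both extreme types, among whom no link pays, while every other player gains
from a link to one of them. Kernel members contribute their isolation demands and sponsor no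
links; everybody else links to a best set of kernel members and tops up the residual. Such a
player links to someone of different taste and so saturates one of the goods; her residual
contribution to the other one is at most `k / c`, as otherwise a link to the extreme type would
pay. Hence nobody gains from a link to her.
-/

theorem ConcaveOn.add_sub_le_add_sub {s : Set ℝ} {f : ℝ → ℝ} (hf : ConcaveOn ℝ s f)
    {a b δ : ℝ} (ha : a ∈ s) (hb : b + δ ∈ s) (hab : a ≤ b) (hδ : 0 ≤ δ) :
    f (b + δ) - f b ≤ f (a + δ) - f a := by
  -- `a + δ` and `b` are convex combinations of `a` and `b + δ` with swapped weights
  obtain ⟨l, hl0, hl1, hl⟩ : ∃ l : ℝ, 0 ≤ l ∧ l ≤ 1 ∧ l * (b + δ - a) = δ := by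
    rcases (show 0 ≤ b + δ - a by linarith).eq_or_lt with h | h
    · exact ⟨0, le_rfl, zero_le_one, by rw [zero_mul]; linarith⟩
    · exact ⟨δ / (b + δ - a), div_nonneg hδ h.le, div_le_one_of_le₀ (by linarith) h.le,
        div_mul_cancel₀ _ h.ne'⟩
  have h1 := hf.2 hb ha hl0 (sub_nonneg.2 hl1) (add_sub_cancel l 1)
  have h2 := hf.2 hb ha (sub_nonneg.2 hl1) hl0 (sub_add_cancel 1 l)
  simp only [smul_eq_mul] at h1 h2
  rw [show l * (b + δ) + (1 - l) * a = a + δ by linear_combination hl] at h1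
  rw [show (1 - l) * (b + δ) + l * a = b by linear_combination -hl] at h2
  linarith

section SpillGain

variable {f : ℝ → ℝ} {c u d s : ℝ}

/-- The gain over isolation from spillovers `s`, for weight `u` and isolation demand `d`
(see `add_spillGain_eq`). -/
def spillGain (f : ℝ → ℝ) (c u d s : ℝ) : ℝ :=
  c * min d s + u * (f (max d s) - f d)

def IsDemand (f : ℝ → ℝ) (c u d : ℝ) : Prop :=
  0 ≤ d ∧ ∀ X, 0 ≤ X → u * f X - c * X ≤ u * f d - c * d

theorem IsIsolationDemand.isDemand_fst {t x y : ℝ} (h : IsIsolationDemand f c t x y) :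
    IsDemand f c t x :=
  ⟨h.1, fun X hX => by linarith [h.2.2 X y hX h.2.1]⟩

theorem IsIsolationDemand.isDemand_snd {t x y : ℝ} (h : IsIsolationDemand f c t x y) :
    IsDemand f c (1 - t) y :=
  ⟨h.2.1, fun Y hY => by linarith [h.2.2 x Y h.1 hY]⟩

theorem IsDemand.le_of_lt (hf : StrictMonoOn f (Ici 0)) {v dv : ℝ} (hu : IsDemand f c u d)
    (hv : IsDemand f c v dv) (huv : u < v) : d ≤ dv := by
  by_contra! h
  have hfd : f dv < f d := hf hv.1 hu.1 h
  nlinarith [hu.2 dv hv.1, hv.2 d hu.1, mul_pos (sub_pos.2 huv) (sub_pos.2 hfd)]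

theorem IsDemand.eq_zero (hc : 0 < c) (h : IsDemand f c 0 d) : d = 0 := by
  have := h.2 0 le_rfl
  simp only [zero_mul, mul_zero, sub_zero, zero_sub] at this
  nlinarith [h.1]

theorem spillGain_of_le (h : s ≤ d) : spillGain f c u d s = c * s := by
  simp [spillGain, min_eq_right h, max_eq_left h]

theorem spillGain_of_ge (h : d ≤ s) : spillGain f c u d s = c * d + u * (f s - f d) := by
  simp [spillGain, min_eq_left h, max_eq_right h]

theorem spillGain_zero (hd : 0 ≤ d) : spillGain f c u d 0 = 0 := by
  simp [spillGain_of_le hd]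

theorem spillGain_eq_objective :
    spillGain f c u d s = c * s + (u * f (max d s) - c * max d s) - (u * f d - c * d) := by
  rcases le_total d s with h | h
  · rw [spillGain_of_ge h, max_eq_right h]; ring
  · rw [spillGain_of_le h, max_eq_left h]; ring

theorem add_spillGain_eq :
    u * f (max (d - s) 0 + s) - c * max (d - s) 0 = (u * f d - c * d) + spillGain f c u d s := by
  rcases le_total s d with h | h
  · rw [spillGain_of_le h, max_eq_left (sub_nonneg.2 h), sub_add_cancel]; ring
  · rw [spillGain_of_ge h, max_eq_right (sub_nonpos.2 h), zero_add]; ring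

theorem mul_le_spillGain (hf : MonotoneOn f (Ici 0)) (hu : 0 ≤ u) (hd : 0 ≤ d) (h : d ≤ s) :
    c * d ≤ spillGain f c u d s := by
  rw [spillGain_of_ge h]
  linarith [mul_nonneg hu (sub_nonneg.2 (hf hd (hd.trans h) h))]

theorem IsDemand.spillGain_le (h : IsDemand f c u d) (hs : 0 ≤ s) :
    spillGain f c u d s ≤ c * s := by
  rw [spillGain_eq_objective]
  linarith [h.2 (max d s) (le_max_of_le_right hs)]

theorem IsDemand.objective_antitoneOn (hf : ConcaveOn ℝ (Ici 0) f) (hu : 0 ≤ u)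
    (h : IsDemand f c u d) {x y : ℝ} (hdx : d ≤ x) (hxy : x ≤ y) :
    u * f y - c * y ≤ u * f x - c * x := by
  have hinc := hf.add_sub_le_add_sub h.1 (show (0 : ℝ) ≤ x + (y - x) by linarith [h.1]) hdx
    (sub_nonneg.2 hxy)
  rw [add_sub_cancel] at hinc
  nlinarith [mul_le_mul_of_nonneg_left hinc hu, h.2 (d + (y - x)) (by linarith [h.1])]

theorem IsDemand.sub_le_add_spillGain (hf : ConcaveOn ℝ (Ici 0) f) (hu : 0 ≤ u)
    (h : IsDemand f c u d) {w : ℝ} (hw : 0 ≤ w) (hs : 0 ≤ s) :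
    u * f (w + s) - c * w ≤ (u * f d - c * d) + spillGain f c u d s := by
  rw [spillGain_eq_objective]
  rcases le_total s d with hsd | hds
  · rw [max_eq_left hsd]; linarith [h.2 (w + s) (by linarith)]
  · rw [max_eq_right hds]; linarith [h.objective_antitoneOn hf hu hds (le_add_of_nonneg_left hw)]

theorem IsDemand.spillGain_add_le (hf : ConcaveOn ℝ (Ici 0) f) (hu : 0 ≤ u)
    (h : IsDemand f c u d) {s' : ℝ} (hs : 0 ≤ s) (hs' : 0 ≤ s') :
    spillGain f c u d (s + s') ≤ spillGain f c u d s + spillGain f c u d s' := by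
  -- with `φ X = u f X - c X`: concavity gives `φ (a + b - d) + φ d ≤ φ a + φ b` for
  -- `a = max d s`, `b = max d s'`, and `φ` decreases from `a + b - d` to `max d (s + s')`
  simp only [spillGain_eq_objective]
  have hconc := hf.add_sub_le_add_sub h.1
    (show (0 : ℝ) ≤ max d s + (max d s' - d) by linarith [le_max_left d s, le_max_left d s', h.1])
    (le_max_left d s) (sub_nonneg.2 (le_max_left d s'))
  rw [add_sub_cancel] at hconc
  have hle : max d s + (max d s' - d) ≤ max d (s + s') := by
    rcases max_cases d s with ⟨h1, _⟩ | ⟨h1, _⟩ <;> rcases max_cases d s' with ⟨h2, _⟩ | ⟨h2, _⟩ <;>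
      rcases max_cases d (s + s') with ⟨h3, _⟩ | ⟨h3, _⟩ <;> linarith [h.1]
  have hanti := h.objective_antitoneOn hf hu
    (by linarith [le_max_left d s, le_max_left d s'] : d ≤ max d s + (max d s' - d)) hle
  nlinarith [mul_le_mul_of_nonneg_left hconc hu]

theorem IsDemand.spillGain_le_spillGain (hf : MonotoneOn f (Ici 0)) {v dv : ℝ}
    (h : IsDemand f c u d) (hdv : 0 ≤ dv) (huv : u ≤ v) (hd : d ≤ dv) (hs : dv ≤ s) :
    spillGain f c u d s ≤ spillGain f c v dv s := by
  rw [spillGain_of_ge (hd.trans hs), spillGain_of_ge hs]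
  nlinarith [h.2 dv hdv, mul_nonneg (sub_nonneg.2 huv) (sub_nonneg.2 (hf hdv (hdv.trans hs) hs))]

theorem mul_max_sub_le {k D S : ℝ} (hf : MonotoneOn f (Ici 0)) (hu : 0 ≤ u) (hd : 0 ≤ d)
    (hk : 0 ≤ k) (hdD : d ≤ D) (hS : 0 ≤ S)
    (h : S < d → spillGain f c u d (D + S) - k ≤ spillGain f c u d S) :
    c * max (d - S) 0 ≤ k := by
  rcases le_or_gt d S with hdS | hSd
  · rw [max_eq_right (sub_nonpos.2 hdS), mul_zero]; exact hk
  · rw [max_eq_left (sub_nonneg.2 hSd.le)]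
    linarith [h hSd, spillGain_of_le (f := f) (c := c) (u := u) hSd.le,
      mul_le_spillGain (c := c) hf hu hd (show d ≤ D + S by linarith)]

end SpillGain

section Kernel

variable {α β : Type*} [DecidableEq α] [LinearOrder β] {τ : α → β} {γ : α → α → ℝ} {k : ℝ}

/-- A kernel of the digraph with arcs `p → j` for `k ≤ γ p j`, with stability in the weak form
`γ i j ≤ k`. -/
def IsKernel (γ : α → α → ℝ) (k : ℝ) (V F : Finset α) : Prop :=
  F ⊆ V ∧ (∀ i ∈ F, ∀ j ∈ F, i ≠ j → γ i j ≤ k) ∧ ∀ p ∈ V, p ∉ F → ∃ j ∈ F, k ≤ γ p j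

theorem IsKernel.insert {V F : Finset α} {v : α} (hv : v ∈ V)
    (hF : IsKernel γ k ((V.erase v).filter fun q => γ q v < k) F) (hvF : ∀ w ∈ F, γ v w ≤ k) :
    IsKernel γ k V (insert v F) := by
  obtain ⟨hsub, hstab, habs⟩ := hF
  have hmem : ∀ {q}, q ∈ F → (q ≠ v ∧ q ∈ V) ∧ γ q v < k := fun hq => by
    simpa using hsub hq
  refine ⟨insert_subset hv fun q hq => (hmem hq).1.2, ?_, fun p hp hpF => ?_⟩
  · intro i hi j hj hij
    rcases mem_insert.1 hi with hi | hi <;> rcases mem_insert.1 hj with hj | hj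
    · exact absurd (hi.trans hj.symm) hij
    · rw [hi]; exact hvF j hj
    · rw [hj]; exact (hmem hi).2.le
    · exact hstab i hi j hj hij
  have hpv : p ≠ v := fun h => hpF (h ▸ mem_insert_self v F)
  by_cases hpk : γ p v < k
  · obtain ⟨j, hj, hpj⟩ := habs p (mem_filter.2 ⟨mem_erase.2 ⟨hpv, hp⟩, hpk⟩)
      fun h => hpF (mem_insert_of_mem h)
    exact ⟨j, mem_insert_of_mem hj, hpj⟩
  · exact ⟨v, mem_insert_self v F, not_lt.1 hpk⟩

theorem IsKernel.of_min (hτ : Injective τ)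
    (hbelow : ∀ a b p, τ a < τ b → τ b < τ p → γ p a ≤ γ b a)
    (habove : ∀ a b p, τ a < τ b → τ b < τ p → γ a p ≤ γ b p)
    {V F : Finset α} {v w : α} (hv : ∀ b ∈ V, τ v ≤ τ b)
    (hF : IsKernel γ k ((V.erase v).filter fun q => γ q v < k) F) (hw : w ∈ F)
    (hvw : k < γ v w) : IsKernel γ k V F := by
  obtain ⟨hsub, hstab, habs⟩ := hF
  have hmem : ∀ {q}, q ∈ F → (q ≠ v ∧ q ∈ V) ∧ γ q v < k := fun hq => by
    simpa using hsub hq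
  have hlt : ∀ {q}, q ∈ V → q ≠ v → τ v < τ q := fun hq hqv =>
    (hv _ hq).lt_of_ne (hτ.ne hqv.symm)
  refine ⟨fun q hq => (hmem hq).1.2, hstab, fun p hp hpF => ?_⟩
  by_cases hpv : p = v
  · exact ⟨w, hw, hpv ▸ hvw.le⟩
  by_cases hpk : γ p v < k
  · exact habs p (mem_filter.2 ⟨mem_erase.2 ⟨hpv, hp⟩, hpk⟩) hpF
  -- `p` is tempted by `v`, and the interval property passes this on to `w`
  obtain ⟨⟨hwv, hwV⟩, hwk⟩ := hmem hw
  refine ⟨w, hw, ?_⟩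
  rcases lt_trichotomy (τ p) (τ w) with h | h | h
  · exact hvw.le.trans (habove v p w (hlt hp hpv) h)
  · exact absurd hw (hτ h ▸ hpF)
  · exact absurd ((not_lt.1 hpk).trans (hbelow v w p (hlt hwV hwv) h)) (not_le.2 hwk)

theorem exists_isKernel (hτ : Injective τ)
    (hbelow : ∀ a b p, τ a < τ b → τ b < τ p → γ p a ≤ γ b a)
    (habove : ∀ a b p, τ a < τ b → τ b < τ p → γ a p ≤ γ b p) (V : Finset α) :
    ∃ F, IsKernel γ k V F := by
  induction V using Finset.strongInduction with
  | H V ih =>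
    rcases V.eq_empty_or_nonempty with rfl | hne
    · exact ⟨∅, by simp [IsKernel]⟩
    obtain ⟨v, hv, hmin⟩ := V.exists_min_image τ hne
    obtain ⟨F, hF⟩ := ih _ ((filter_subset (fun q => γ q v < k) _).trans_ssubset (erase_ssubset hv))
    by_cases h : ∃ w ∈ F, k < γ v w
    · obtain ⟨w, hw, hvw⟩ := h
      exact ⟨F, hF.of_min hτ hbelow habove hmin hw hvw⟩
    · push Not at h
      exact ⟨insert v F, hF.insert hv h⟩

theorem IsKernel.union {V S F : Finset α} (hSV : S ⊆ V)
    (hS : ∀ a ∈ S, ∀ b ∈ S, a ≠ b → γ a b ≤ k) (hSγ : ∀ a ∈ S, ∀ j, γ a j ≤ γ j a)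
    (hF : IsKernel γ k (V.filter fun j => j ∉ S ∧ ∀ a ∈ S, γ j a < k) F) :
    IsKernel γ k V (S ∪ F) := by
  obtain ⟨hsub, hstab, habs⟩ := hF
  have hmem : ∀ {j}, j ∈ F → j ∈ V ∧ j ∉ S ∧ ∀ a ∈ S, γ j a < k := fun hj =>
    mem_filter.1 (hsub hj)
  refine ⟨union_subset hSV fun j hj => (hmem hj).1, ?_, fun p hp hpSF => ?_⟩
  · intro i hi j hj hij
    rcases mem_union.1 hi with hi | hi <;> rcases mem_union.1 hj with hj | hj
    · exact hS i hi j hj hij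
    · exact (hSγ i hi j).trans ((hmem hj).2.2 i hi).le
    · exact ((hmem hi).2.2 j hj).le
    · exact hstab i hi j hj hij
  by_cases hpk : ∀ a ∈ S, γ p a < k
  · obtain ⟨j, hj, hpj⟩ := habs p (mem_filter.2 ⟨hp, fun h => hpSF (mem_union_left F h), hpk⟩)
      fun h => hpSF (mem_union_right S h)
    exact ⟨j, mem_union_right S hj, hpj⟩
  · push Not at hpk
    obtain ⟨a, ha, hpa⟩ := hpk
    exact ⟨a, mem_union_left F ha, hpa⟩

end Kernel

theorem exists_argmax_nonempty {α : Type*} (F : Finset α) (φ : Finset α → ℝ) {T₀ : Finset α}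
    (hT₀F : T₀ ⊆ F) (hT₀ : T₀.Nonempty) (h : φ ∅ ≤ φ T₀) :
    ∃ T ⊆ F, T.Nonempty ∧ ∀ T' ⊆ F, φ T' ≤ φ T := by
  have hT₀mem : T₀ ∈ F.powerset.filter Finset.Nonempty :=
    mem_filter.2 ⟨Finset.mem_powerset.2 hT₀F, hT₀⟩
  obtain ⟨T, hT, hmax⟩ := (F.powerset.filter Finset.Nonempty).exists_max_image φ ⟨T₀, hT₀mem⟩
  rw [mem_filter, Finset.mem_powerset] at hT
  refine ⟨T, hT.1, hT.2, fun T' hT' => ?_⟩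
  rcases T'.eq_empty_or_nonempty with rfl | hne
  · exact h.trans (hmax T₀ hT₀mem)
  · exact hmax T' (mem_filter.2 ⟨Finset.mem_powerset.2 hT', hne⟩)

section Bundle

variable {f : ℝ → ℝ} {c u x y : ℝ}

def bundleGain (f : ℝ → ℝ) (c u x y X Y : ℝ) : ℝ :=
  spillGain f c u x X + spillGain f c (1 - u) y Y

def isolationPayoff (f : ℝ → ℝ) (c u x y : ℝ) : ℝ :=
  u * f x + (1 - u) * f y - c * (x + y)

theorem bundleGain_add_le (hf : ConcaveOn ℝ (Ici 0) f) (hu : u ∈ Set.Icc (0 : ℝ) 1)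
    (hx : IsDemand f c u x) (hy : IsDemand f c (1 - u) y) {X Y X' Y' : ℝ} (hX : 0 ≤ X)
    (hY : 0 ≤ Y) (hX' : 0 ≤ X') (hY' : 0 ≤ Y') :
    bundleGain f c u x y (X + X') (Y + Y')
      ≤ bundleGain f c u x y X Y + bundleGain f c u x y X' Y' := by
  unfold bundleGain
  linarith [hx.spillGain_add_le hf hu.1 hX hX', hy.spillGain_add_le hf (sub_nonneg.2 hu.2) hY hY']

theorem bundleGain_sum_le (hf : ConcaveOn ℝ (Ici 0) f) (hu : u ∈ Set.Icc (0 : ℝ) 1)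
    (hx : IsDemand f c u x) (hy : IsDemand f c (1 - u) y) {ι : Type*} (T : Finset ι)
    {X Y : ι → ℝ} (hX : ∀ j ∈ T, 0 ≤ X j) (hY : ∀ j ∈ T, 0 ≤ Y j) :
    bundleGain f c u x y (∑ j ∈ T, X j) (∑ j ∈ T, Y j)
      ≤ ∑ j ∈ T, bundleGain f c u x y (X j) (Y j) := by
  have := le_sum_of_subadditive_on_pred (fun z : ℝ × ℝ => bundleGain f c u x y z.1 z.2)
    (fun z => 0 ≤ z.1 ∧ 0 ≤ z.2) (by simp [bundleGain, spillGain_zero hx.1, spillGain_zero hy.1])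
    (fun z z' hz hz' => bundleGain_add_le hf hu hx hy hz.1 hz.2 hz'.1 hz'.2)
    (fun z z' hz hz' => ⟨add_nonneg hz.1 hz'.1, add_nonneg hz.2 hz'.2⟩)
    (fun j => (X j, Y j)) (s := T) fun j hj => ⟨hX j hj, hY j hj⟩
  simpa only [Prod.fst_sum, Prod.snd_sum] using this

end Bundle

section Game

variable {n : ℕ}

def pairGain (t : Fin n → ℝ) (f : ℝ → ℝ) (c : ℝ) (xhat yhat : Fin n → ℝ) (i j : Fin n) : ℝ :=
  bundleGain f c (t i) (xhat i) (yhat i) (xhat j) (yhat j)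

def linkValue (t : Fin n → ℝ) (f : ℝ → ℝ) (c k : ℝ) (xhat yhat : Fin n → ℝ) (i : Fin n)
    (T : Finset (Fin n)) : ℝ :=
  bundleGain f c (t i) (xhat i) (yhat i) (∑ j ∈ T, xhat j) (∑ j ∈ T, yhat j) - #T * k

def linksOf (σ : Fin n → Finset (Fin n)) : Fin n → Fin n → Bool :=
  fun i j => decide (j ∈ σ i)

def topUp (d : Fin n → ℝ) (σ : Fin n → Finset (Fin n)) : Fin n → ℝ :=
  fun i => max (d i - ∑ j ∈ σ i, d j) 0

variable {t : Fin n → ℝ} {f : ℝ → ℝ} {c k : ℝ} {xhat yhat : Fin n → ℝ}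

theorem spill_linksOf (x : Fin n → ℝ) (σ : Fin n → Finset (Fin n)) (i : Fin n) :
    spill x (linksOf σ) i = ∑ j ∈ σ i, x j := by
  simp [spill, linksOf]

theorem nlinks_linksOf (σ : Fin n → Finset (Fin n)) (i : Fin n) :
    nlinks (linksOf σ) i = #(σ i) := by
  simp [nlinks, linksOf]

theorem payoff_le_of_nonneg (hf : ConcaveOn ℝ (Ici 0) f) {i : Fin n} (ht : t i ∈ Set.Icc 0 1)
    (hx : IsDemand f c (t i) (xhat i)) (hy : IsDemand f c (1 - t i) (yhat i))
    {x y : Fin n → ℝ} {g : Fin n → Fin n → Bool} (hxi : 0 ≤ x i) (hyi : 0 ≤ y i)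
    (hsx : 0 ≤ spill x g i) (hsy : 0 ≤ spill y g i) :
    payoff t f c k x y g i ≤ isolationPayoff f c (t i) (xhat i) (yhat i)
      + bundleGain f c (t i) (xhat i) (yhat i) (spill x g i) (spill y g i) - nlinks g i * k := by
  rw [payoff, isolationPayoff, bundleGain]
  linarith [hx.sub_le_add_spillGain hf ht.1 hxi hsx,
    hy.sub_le_add_spillGain hf (sub_nonneg.2 ht.2) hyi hsy]

theorem payoff_eq_of_best_response {x y : Fin n → ℝ} {g : Fin n → Fin n → Bool} {i : Fin n}
    (hxi : x i = max (xhat i - spill x g i) 0) (hyi : y i = max (yhat i - spill y g i) 0) :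
    payoff t f c k x y g i = isolationPayoff f c (t i) (xhat i) (yhat i)
      + bundleGain f c (t i) (xhat i) (yhat i) (spill x g i) (spill y g i) - nlinks g i * k := by
  have hx := add_spillGain_eq (f := f) (c := c) (u := t i) (d := xhat i) (s := spill x g i)
  have hy := add_spillGain_eq (f := f) (c := c) (u := 1 - t i) (d := yhat i) (s := spill y g i)
  rw [payoff, isolationPayoff, bundleGain, hxi, hyi]
  linarith

theorem payoff_update_le (hf : ConcaveOn ℝ (Ici 0) f) {i : Fin n} (ht : t i ∈ Set.Icc 0 1)
    (hx : IsDemand f c (t i) (xhat i)) (hy : IsDemand f c (1 - t i) (yhat i))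
    {x y : Fin n → ℝ} (hx0 : ∀ j, 0 ≤ x j) (hy0 : ∀ j, 0 ≤ y j) (g : Fin n → Fin n → Bool)
    {xi yi : ℝ} {gi : Fin n → Bool} (hxi : 0 ≤ xi) (hyi : 0 ≤ yi) (hgi : gi i = false) :
    payoff t f c k (update x i xi) (update y i yi) (updLinks g i gi) i
      ≤ isolationPayoff f c (t i) (xhat i) (yhat i)
        + bundleGain f c (t i) (xhat i) (yhat i) (∑ j ∈ univ.filter (gi · = true), x j)
          (∑ j ∈ univ.filter (gi · = true), y j) - #(univ.filter (gi · = true)) * k := by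
  have hspill : ∀ (z : Fin n → ℝ) (zi : ℝ),
      spill (update z i zi) (updLinks g i gi) i = ∑ j ∈ univ.filter (gi · = true), z j := by
    intro z zi
    rw [spill, ← sum_filter]
    refine sum_congr (by ext j; simp [updLinks]) fun j hj => update_of_ne ?_ _ _
    rintro rfl
    simp [hgi] at hj
  have hnlinks : nlinks (updLinks g i gi) i = #(univ.filter (gi · = true)) := by
    simp [nlinks, updLinks]
  have := payoff_le_of_nonneg (k := k) hf ht hx hy (x := update x i xi) (y := update y i yi)
    (g := updLinks g i gi) (by simpa using hxi) (by simpa using hyi)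
    (by rw [hspill]; exact sum_nonneg fun j _ => hx0 j)
    (by rw [hspill]; exact sum_nonneg fun j _ => hy0 j)
  rwa [hspill, hspill, hnlinks] at this

end Game

section Profile

variable {n : ℕ} {t : Fin n → ℝ} {f : ℝ → ℝ} {c k : ℝ} {xhat yhat : Fin n → ℝ}

theorem linkValue_empty {i : Fin n} (hx : 0 ≤ xhat i) (hy : 0 ≤ yhat i) :
    linkValue t f c k xhat yhat i ∅ = 0 := by
  simp [linkValue, bundleGain, spillGain_zero hx, spillGain_zero hy]

theorem linkValue_singleton (i j : Fin n) :
    linkValue t f c k xhat yhat i {j} = pairGain t f c xhat yhat i j - k := by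
  simp [linkValue, pairGain]

theorem linkValue_le_sum (hf : ConcaveOn ℝ (Ici 0) f) {i : Fin n} (ht : t i ∈ Set.Icc 0 1)
    (hx : ∀ j, IsDemand f c (t j) (xhat j)) (hy : ∀ j, IsDemand f c (1 - t j) (yhat j))
    (T : Finset (Fin n)) :
    linkValue t f c k xhat yhat i T ≤ ∑ j ∈ T, (pairGain t f c xhat yhat i j - k) := by
  rw [linkValue, sum_sub_distrib, sum_const, nsmul_eq_mul]
  simp only [pairGain]
  linarith [bundleGain_sum_le hf ht (hx i) (hy i) T (fun j _ => (hx j).1) fun j _ => (hy j).1]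

theorem topUp_of_mem {d : Fin n → ℝ} (hd : ∀ j, 0 ≤ d j) {σ : Fin n → Finset (Fin n)}
    {F : Finset (Fin n)} (hσF : ∀ j ∈ F, σ j = ∅) {j : Fin n} (hj : j ∈ F) :
    topUp d σ j = d j := by
  simp [topUp, hσF j hj, hd j]

theorem payoff_linksOf (hx : ∀ j, 0 ≤ xhat j) (hy : ∀ j, 0 ≤ yhat j)
    {σ : Fin n → Finset (Fin n)} {F : Finset (Fin n)} (hσ : ∀ i, σ i ⊆ F)
    (hσF : ∀ j ∈ F, σ j = ∅) (i : Fin n) :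
    payoff t f c k (topUp xhat σ) (topUp yhat σ) (linksOf σ) i
      = isolationPayoff f c (t i) (xhat i) (yhat i) + linkValue t f c k xhat yhat i (σ i) := by
  have hspill : ∀ d : Fin n → ℝ, (∀ j, 0 ≤ d j) →
      spill (topUp d σ) (linksOf σ) i = ∑ j ∈ σ i, d j := fun d hd => by
    rw [spill_linksOf]
    exact sum_congr rfl fun j hj => topUp_of_mem hd hσF (hσ i hj)
  rw [payoff_eq_of_best_response (by rw [hspill xhat hx]; rfl) (by rw [hspill yhat hy]; rfl),
    hspill xhat hx, hspill yhat hy, nlinks_linksOf, linkValue]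
  ring

theorem bundleGain_topUp_sum_le (hf : ConcaveOn ℝ (Ici 0) f) {i : Fin n}
    (ht : t i ∈ Set.Icc 0 1) (hx : ∀ j, IsDemand f c (t j) (xhat j))
    (hy : ∀ j, IsDemand f c (1 - t j) (yhat j)) {σ : Fin n → Finset (Fin n)}
    {F : Finset (Fin n)} (hσF : ∀ j ∈ F, σ j = ∅)
    (hout : ∀ q ∉ F, bundleGain f c (t i) (xhat i) (yhat i) (topUp xhat σ q) (topUp yhat σ q) ≤ k)
    (L : Finset (Fin n)) :
    bundleGain f c (t i) (xhat i) (yhat i) (∑ j ∈ L, topUp xhat σ j) (∑ j ∈ L, topUp yhat σ j)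
      - #L * k ≤ linkValue t f c k xhat yhat i (L ∩ F) := by
  have hx0 : ∀ j, 0 ≤ topUp xhat σ j := fun j => le_max_right _ _
  have hy0 : ∀ j, 0 ≤ topUp yhat σ j := fun j => le_max_right _ _
  have hinter : ∀ d : Fin n → ℝ, (∀ j, 0 ≤ d j) →
      ∑ j ∈ L ∩ F, topUp d σ j = ∑ j ∈ L ∩ F, d j := fun d hd =>
    sum_congr rfl fun j hj => topUp_of_mem hd hσF (Finset.mem_inter.1 hj).2
  have hsplit := bundleGain_add_le hf ht (hx i) (hy i) (sum_nonneg fun j _ => hx0 j)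
    (sum_nonneg fun j _ => hy0 j) (sum_nonneg fun j _ => hx0 j) (sum_nonneg fun j _ => hy0 j)
    (X := ∑ j ∈ L ∩ F, topUp xhat σ j) (Y := ∑ j ∈ L ∩ F, topUp yhat σ j)
    (X' := ∑ j ∈ L \ F, topUp xhat σ j) (Y' := ∑ j ∈ L \ F, topUp yhat σ j)
  have houtside := bundleGain_sum_le hf ht (hx i) (hy i) (L \ F) (fun j _ => hx0 j) fun j _ => hy0 j
  have hsmall : ∑ j ∈ L \ F, bundleGain f c (t i) (xhat i) (yhat i) (topUp xhat σ j)
      (topUp yhat σ j) ≤ #(L \ F) * k := by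
    rw [← nsmul_eq_mul, ← sum_const]
    exact sum_le_sum fun j hj => hout j (mem_sdiff.1 hj).2
  rw [sum_inter_add_sum_sdiff, sum_inter_add_sum_sdiff, hinter xhat fun j => (hx j).1,
    hinter yhat fun j => (hy j).1] at hsplit
  rw [linkValue, ← card_inter_add_card_sdiff L F]
  push_cast
  linarith

theorem nashEq_linksOf (hf : ConcaveOn ℝ (Ici 0) f) (ht : ∀ i, t i ∈ Set.Icc 0 1)
    (hx : ∀ j, IsDemand f c (t j) (xhat j)) (hy : ∀ j, IsDemand f c (1 - t j) (yhat j))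
    {σ : Fin n → Finset (Fin n)} {F : Finset (Fin n)} (hσ : ∀ i, σ i ⊆ F.erase i)
    (hσF : ∀ j ∈ F, σ j = ∅)
    (hbest : ∀ i, ∀ T ⊆ F.erase i,
      linkValue t f c k xhat yhat i T ≤ linkValue t f c k xhat yhat i (σ i))
    (hout : ∀ q ∉ F, ∀ i,
      bundleGain f c (t i) (xhat i) (yhat i) (topUp xhat σ q) (topUp yhat σ q) ≤ k) :
    NashEq t f c k (topUp xhat σ) (topUp yhat σ) (linksOf σ) := by
  refine ⟨fun _ => le_max_right _ _, fun _ => le_max_right _ _, fun i => ?_,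
    fun i xi yi gi hxi hyi hgi => ?_⟩
  · simpa [linksOf] using fun h => (mem_erase.1 (hσ i h)).1 rfl
  have hLF : univ.filter (gi · = true) ∩ F ⊆ F.erase i := fun j hj => by
    rw [Finset.mem_inter, mem_filter] at hj
    exact mem_erase.2 ⟨fun h => by simp [h, hgi] at hj, hj.2⟩
  rw [payoff_linksOf (fun j => (hx j).1) (fun j => (hy j).1)
    (fun i => (hσ i).trans (erase_subset i F)) hσF]
  linarith [payoff_update_le (k := k) hf (ht i) (hx i) (hy i) (x := topUp xhat σ)
      (y := topUp yhat σ) (fun _ => le_max_right _ _) (fun _ => le_max_right _ _) (linksOf σ)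
      hxi hyi hgi,
    bundleGain_topUp_sum_le hf (ht i) hx hy hσF (fun q hq => hout q hq i)
      (univ.filter (gi · = true)),
    hbest i _ hLF]

end Profile

section Construction

variable {n : ℕ} {t : Fin n → ℝ} {f : ℝ → ℝ} {c k : ℝ} {xhat yhat : Fin n → ℝ}

theorem pairGain_le_of_between_below (hf : StrictMonoOn f (Ici 0))
    (hx : ∀ j, IsDemand f c (t j) (xhat j)) (hy : ∀ j, IsDemand f c (1 - t j) (yhat j))
    {a b p : Fin n} (hab : t a < t b) (hbp : t b < t p) :
    pairGain t f c xhat yhat p a ≤ pairGain t f c xhat yhat b a := by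
  have hxm : ∀ i j, t i < t j → xhat i ≤ xhat j := fun i j h => (hx i).le_of_lt hf (hx j) h
  have hym : ∀ i j, t i < t j → yhat j ≤ yhat i := fun i j h =>
    (hy j).le_of_lt hf (hy i) (by linarith)
  rw [pairGain, pairGain, bundleGain, bundleGain, spillGain_of_le (hxm a p (hab.trans hbp)),
    spillGain_of_le (hxm a b hab)]
  linarith [(hy p).spillGain_le_spillGain hf.monotoneOn (hy b).1
    (show 1 - t p ≤ 1 - t b by linarith) (hym b p hbp) (hym a b hab)]

theorem pairGain_le_of_between_above (hf : StrictMonoOn f (Ici 0))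
    (hx : ∀ j, IsDemand f c (t j) (xhat j)) (hy : ∀ j, IsDemand f c (1 - t j) (yhat j))
    {a b p : Fin n} (hab : t a < t b) (hbp : t b < t p) :
    pairGain t f c xhat yhat a p ≤ pairGain t f c xhat yhat b p := by
  have hxm : ∀ i j, t i < t j → xhat i ≤ xhat j := fun i j h => (hx i).le_of_lt hf (hx j) h
  have hym : ∀ i j, t i < t j → yhat j ≤ yhat i := fun i j h =>
    (hy j).le_of_lt hf (hy i) (by linarith)
  rw [pairGain, pairGain, bundleGain, bundleGain, spillGain_of_le (hym a p (hab.trans hbp)),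
    spillGain_of_le (hym b p hbp)]
  linarith [(hx a).spillGain_le_spillGain hf.monotoneOn (hx b).1 hab.le (hxm a b hab)
    (hxm b p hbp)]

theorem demand_of_weight_one (hc : 0 < c) (hinj : Injective t) (ht : ∀ i, t i ∈ Set.Icc 0 1)
    (hf : StrictMonoOn f (Ici 0)) (hx : ∀ j, IsDemand f c (t j) (xhat j))
    (hy : ∀ j, IsDemand f c (1 - t j) (yhat j)) {A : Fin n} (hA : t A = 1) :
    yhat A = 0 ∧ ∀ j, xhat j ≤ xhat A := by
  refine ⟨IsDemand.eq_zero hc (by simpa [hA] using hy A), fun j => ?_⟩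
  rcases (ht j).2.lt_or_eq with h | h
  · exact (hx j).le_of_lt hf (hx A) (hA ▸ h)
  · rw [hinj (h.trans hA.symm)]

theorem demand_of_weight_zero (hc : 0 < c) (hinj : Injective t) (ht : ∀ i, t i ∈ Set.Icc 0 1)
    (hf : StrictMonoOn f (Ici 0)) (hx : ∀ j, IsDemand f c (t j) (xhat j))
    (hy : ∀ j, IsDemand f c (1 - t j) (yhat j)) {B : Fin n} (hB : t B = 0) :
    xhat B = 0 ∧ ∀ j, yhat j ≤ yhat B := by
  refine ⟨IsDemand.eq_zero hc (by simpa [hB] using hx B), fun j => ?_⟩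
  rcases (ht j).1.lt_or_eq with h | h
  · exact (hy j).le_of_lt hf (hy B) (by linarith)
  · rw [hinj (h.symm.trans hB.symm)]

theorem pairGain_of_weight_one (hc : 0 < c) (hinj : Injective t) (ht : ∀ i, t i ∈ Set.Icc 0 1)
    (hf : StrictMonoOn f (Ici 0)) (hx : ∀ j, IsDemand f c (t j) (xhat j))
    (hy : ∀ j, IsDemand f c (1 - t j) (yhat j)) {A : Fin n} (hA : t A = 1) (j : Fin n) :
    pairGain t f c xhat yhat A j ≤ c * xhat j ∧ c * xhat j ≤ pairGain t f c xhat yhat j A := by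
  obtain ⟨hyA, hxA⟩ := demand_of_weight_one hc hinj ht hf hx hy hA
  have hy0 : spillGain f c (1 - t A) (yhat A) (yhat j) = 0 := by
    rw [hyA, spillGain_of_ge (hy j).1, hA]; ring
  rw [pairGain, pairGain, bundleGain, bundleGain, hy0, hyA, spillGain_zero (hy j).1]
  exact ⟨by linarith [(hx A).spillGain_le (hx j).1],
    by linarith [mul_le_spillGain (c := c) hf.monotoneOn (ht j).1 (hx j).1 (hxA j)]⟩

theorem pairGain_of_weight_zero (hc : 0 < c) (hinj : Injective t) (ht : ∀ i, t i ∈ Set.Icc 0 1)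
    (hf : StrictMonoOn f (Ici 0)) (hx : ∀ j, IsDemand f c (t j) (xhat j))
    (hy : ∀ j, IsDemand f c (1 - t j) (yhat j)) {B : Fin n} (hB : t B = 0) (j : Fin n) :
    pairGain t f c xhat yhat B j ≤ c * yhat j ∧ c * yhat j ≤ pairGain t f c xhat yhat j B := by
  obtain ⟨hxB, hyB⟩ := demand_of_weight_zero hc hinj ht hf hx hy hB
  have hx0 : spillGain f c (t B) (xhat B) (xhat j) = 0 := by
    rw [hxB, spillGain_of_ge (hx j).1, hB]; ring
  rw [pairGain, pairGain, bundleGain, bundleGain, hx0, hxB, spillGain_zero (hx j).1]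
  exact ⟨by linarith [(hy B).spillGain_le (hy j).1], by
    linarith [mul_le_spillGain (c := c) hf.monotoneOn (sub_nonneg.2 (ht j).2) (hy j).1 (hyB j)]⟩

theorem exists_isKernel_pairGain (hc : 0 < c) (hk : 0 ≤ k) (hinj : Injective t)
    (ht : ∀ i, t i ∈ Set.Icc 0 1) (hf : StrictMonoOn f (Ici 0))
    (hx : ∀ j, IsDemand f c (t j) (xhat j)) (hy : ∀ j, IsDemand f c (1 - t j) (yhat j))
    {A B : Fin n} (hA : t A = 1) (hB : t B = 0) :
    ∃ F, A ∈ F ∧ B ∈ F ∧ IsKernel (pairGain t f c xhat yhat) k univ F := by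
  have hAj := pairGain_of_weight_one hc hinj ht hf hx hy hA
  have hBj := pairGain_of_weight_zero hc hinj ht hf hx hy hB
  have hAB : pairGain t f c xhat yhat A B ≤ k := by
    nlinarith [(hAj B).1, (demand_of_weight_zero hc hinj ht hf hx hy hB).1]
  have hBA : pairGain t f c xhat yhat B A ≤ k := by
    nlinarith [(hBj A).1, (demand_of_weight_one hc hinj ht hf hx hy hA).1]
  obtain ⟨F, hF⟩ := exists_isKernel (k := k) hinj
    (fun a b p => pairGain_le_of_between_below hf hx hy)
    (fun a b p => pairGain_le_of_between_above hf hx hy)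
    (univ.filter fun j => j ∉ ({A, B} : Finset (Fin n)) ∧
      ∀ a ∈ ({A, B} : Finset (Fin n)), pairGain t f c xhat yhat j a < k)
  refine ⟨{A, B} ∪ F, by simp, by simp, IsKernel.union (subset_univ _) ?_ ?_ (by convert hF)⟩
  · simp only [Finset.mem_insert, Finset.mem_singleton]
    rintro a (rfl | rfl) b (rfl | rfl) hab <;> first | exact absurd rfl hab | assumption
  · simp only [Finset.mem_insert, Finset.mem_singleton]
    rintro a (rfl | rfl) j
    exacts [(hAj j).1.trans (hAj j).2, (hBj j).1.trans (hBj j).2]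

theorem exists_best_targets (hf : ConcaveOn ℝ (Ici 0) f) (ht : ∀ i, t i ∈ Set.Icc 0 1)
    (hx : ∀ j, IsDemand f c (t j) (xhat j)) (hy : ∀ j, IsDemand f c (1 - t j) (yhat j))
    {F : Finset (Fin n)} (hF : IsKernel (pairGain t f c xhat yhat) k univ F) :
    ∃ σ : Fin n → Finset (Fin n), (∀ i, σ i ⊆ F.erase i) ∧ (∀ i ∈ F, σ i = ∅) ∧
      (∀ i ∉ F, (σ i).Nonempty) ∧ ∀ i, ∀ T ⊆ F.erase i,
        linkValue t f c k xhat yhat i T ≤ linkValue t f c k xhat yhat i (σ i) := by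
  obtain ⟨-, hstab, habs⟩ := hF
  have hσ : ∀ i, ∃ T ⊆ F.erase i, (i ∈ F → T = ∅) ∧ (i ∉ F → T.Nonempty) ∧
      ∀ T' ⊆ F.erase i, linkValue t f c k xhat yhat i T' ≤ linkValue t f c k xhat yhat i T := by
    intro i
    by_cases hi : i ∈ F
    · refine ⟨∅, empty_subset _, fun _ => rfl, (absurd hi ·), fun T hT => ?_⟩
      calc linkValue t f c k xhat yhat i T ≤ ∑ j ∈ T, (pairGain t f c xhat yhat i j - k) :=
            linkValue_le_sum hf (ht i) hx hy T
        _ ≤ 0 := sum_nonpos fun j hj => sub_nonpos.2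
            (hstab i hi j (mem_of_mem_erase (hT hj)) (ne_of_mem_erase (hT hj)).symm)
        _ = linkValue t f c k xhat yhat i ∅ := (linkValue_empty (hx i).1 (hy i).1).symm
    · obtain ⟨j, hj, hij⟩ := habs i (mem_univ i) hi
      obtain ⟨T, hTF, hTne, hmax⟩ := exists_argmax_nonempty (F.erase i)
        (linkValue t f c k xhat yhat i)
        (singleton_subset_iff.2 (mem_erase.2 ⟨ne_of_mem_of_not_mem hj hi, hj⟩))
        (singleton_nonempty j)
        (by rw [linkValue_empty (hx i).1 (hy i).1, linkValue_singleton]; linarith)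
      exact ⟨T, hTF, (absurd · hi), fun _ => hTne, hmax⟩
  choose σ hσF hσempty hσne hσbest using hσ
  exact ⟨σ, hσF, hσempty, hσne, hσbest⟩

theorem topUp_eq_zero_or (hinj : Injective t) (hf : StrictMonoOn f (Ici 0))
    (hx : ∀ j, IsDemand f c (t j) (xhat j)) (hy : ∀ j, IsDemand f c (1 - t j) (yhat j))
    {σ : Fin n → Finset (Fin n)} {q : Fin n} (hq : q ∉ σ q) (hne : (σ q).Nonempty) :
    topUp xhat σ q = 0 ∨ topUp yhat σ q = 0 := by
  obtain ⟨j, hj⟩ := hne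
  simp only [topUp, max_eq_right_iff, sub_nonpos]
  rcases (hinj.ne (ne_of_mem_of_not_mem hj hq)).lt_or_gt with h | h
  · exact Or.inr (((hy q).le_of_lt hf (hy j) (by linarith)).trans
      (single_le_sum (fun i _ => (hy i).1) hj))
  · exact Or.inl (((hx q).le_of_lt hf (hx j) h).trans (single_le_sum (fun i _ => (hx i).1) hj))

theorem mul_topUp_le_of_weight_one (hc : 0 < c) (hk : 0 ≤ k) (hinj : Injective t)
    (ht : ∀ i, t i ∈ Set.Icc 0 1) (hf : StrictMonoOn f (Ici 0))
    (hx : ∀ j, IsDemand f c (t j) (xhat j)) (hy : ∀ j, IsDemand f c (1 - t j) (yhat j))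
    {F : Finset (Fin n)} {σ : Fin n → Finset (Fin n)} (hσ : ∀ i, σ i ⊆ F.erase i)
    (hbest : ∀ i, ∀ T ⊆ F.erase i,
      linkValue t f c k xhat yhat i T ≤ linkValue t f c k xhat yhat i (σ i))
    {A q : Fin n} (hA : t A = 1) (hAF : A ∈ F) (hq : q ∉ F) :
    c * topUp xhat σ q ≤ k := by
  obtain ⟨hyA, hxA⟩ := demand_of_weight_one hc hinj ht hf hx hy hA
  -- a shortfall of more than `k / c` would make an extra link to `A` pay
  refine mul_max_sub_le hf.monotoneOn (ht q).1 (hx q).1 hk (hxA q)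
    (sum_nonneg fun j _ => (hx j).1) fun hlt => ?_
  have hAσ : A ∉ σ q := fun hAσ =>
    (single_le_sum (fun j _ => (hx j).1) hAσ).not_gt (hlt.trans_le (hxA q))
  have := hbest q _ (insert_subset (mem_erase.2 ⟨ne_of_mem_of_not_mem hAF hq, hAF⟩) (hσ q))
  simp only [linkValue, bundleGain, sum_insert hAσ, card_insert_of_notMem hAσ, hyA,
    zero_add] at this
  push_cast at this
  linarith

theorem mul_topUp_le_of_weight_zero (hc : 0 < c) (hk : 0 ≤ k) (hinj : Injective t)
    (ht : ∀ i, t i ∈ Set.Icc 0 1) (hf : StrictMonoOn f (Ici 0))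
    (hx : ∀ j, IsDemand f c (t j) (xhat j)) (hy : ∀ j, IsDemand f c (1 - t j) (yhat j))
    {F : Finset (Fin n)} {σ : Fin n → Finset (Fin n)} (hσ : ∀ i, σ i ⊆ F.erase i)
    (hbest : ∀ i, ∀ T ⊆ F.erase i,
      linkValue t f c k xhat yhat i T ≤ linkValue t f c k xhat yhat i (σ i))
    {B q : Fin n} (hB : t B = 0) (hBF : B ∈ F) (hq : q ∉ F) :
    c * topUp yhat σ q ≤ k := by
  obtain ⟨hxB, hyB⟩ := demand_of_weight_zero hc hinj ht hf hx hy hB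
  refine mul_max_sub_le hf.monotoneOn (sub_nonneg.2 (ht q).2) (hy q).1 hk (hyB q)
    (sum_nonneg fun j _ => (hy j).1) fun hlt => ?_
  have hBσ : B ∉ σ q := fun hBσ =>
    (single_le_sum (fun j _ => (hy j).1) hBσ).not_gt (hlt.trans_le (hyB q))
  have := hbest q _ (insert_subset (mem_erase.2 ⟨ne_of_mem_of_not_mem hBF hq, hBF⟩) (hσ q))
  simp only [linkValue, bundleGain, sum_insert hBσ, card_insert_of_notMem hBσ, hxB,
    zero_add] at this
  push_cast at this
  linarith

theorem bundleGain_topUp_le (hc : 0 < c) (hk : 0 ≤ k) (hinj : Injective t)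
    (ht : ∀ i, t i ∈ Set.Icc 0 1) (hf : StrictMonoOn f (Ici 0))
    (hx : ∀ j, IsDemand f c (t j) (xhat j)) (hy : ∀ j, IsDemand f c (1 - t j) (yhat j))
    {F : Finset (Fin n)} {σ : Fin n → Finset (Fin n)} (hσ : ∀ i, σ i ⊆ F.erase i)
    (hbest : ∀ i, ∀ T ⊆ F.erase i,
      linkValue t f c k xhat yhat i T ≤ linkValue t f c k xhat yhat i (σ i))
    {A B : Fin n} (hA : t A = 1) (hB : t B = 0) (hAF : A ∈ F) (hBF : B ∈ F)
    {q : Fin n} (hq : q ∉ F) (hne : (σ q).Nonempty) (i : Fin n) :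
    bundleGain f c (t i) (xhat i) (yhat i) (topUp xhat σ q) (topUp yhat σ q) ≤ k := by
  have hxq := mul_topUp_le_of_weight_one hc hk hinj ht hf hx hy hσ hbest hA hAF hq
  have hyq := mul_topUp_le_of_weight_zero hc hk hinj ht hf hx hy hσ hbest hB hBF hq
  have hxi : spillGain f c (t i) (xhat i) (topUp xhat σ q) ≤ c * topUp xhat σ q :=
    (hx i).spillGain_le (le_max_right _ _)
  have hyi : spillGain f c (1 - t i) (yhat i) (topUp yhat σ q) ≤ c * topUp yhat σ q :=
    (hy i).spillGain_le (le_max_right _ _)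
  rw [bundleGain]
  rcases topUp_eq_zero_or hinj hf hx hy (fun h => hq (mem_of_mem_erase (hσ q h))) hne with h | h
  · rw [h, spillGain_zero (hx i).1]; linarith
  · rw [h, spillGain_zero (hy i).1]; linarith

end Construction

theorem statement11_general {n : ℕ}
    (t : Fin n → ℝ) (hT : TypeAssumptions t)
    (f : ℝ → ℝ) (c k : ℝ) (hc : 0 < c) (hk : 0 < k)
    (hB : BenefitAssumptions f c)
    (xhat yhat : Fin n → ℝ)
    (hdem : ∀ i, IsIsolationDemand f c (t i) (xhat i) (yhat i)) :
    ∃ (x y : Fin n → ℝ) (g : Fin n → Fin n → Bool),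
      NashEq t f c k x y g ∧
      ∀ i, isContributor g i → ∀ j, g i j = false := by
  obtain ⟨hinj, ht, ⟨B, htB⟩, ⟨A, htA⟩⟩ := hT
  obtain ⟨-, hmono, hconc, -, -⟩ := hB
  have hx := fun i => (hdem i).isDemand_fst
  have hy := fun i => (hdem i).isDemand_snd
  obtain ⟨F, hAF, hBF, hF⟩ := exists_isKernel_pairGain hc hk.le hinj ht hmono hx hy htA htB
  obtain ⟨σ, hσ, hσF, hσne, hbest⟩ := exists_best_targets hconc.concaveOn ht hx hy hF
  have hout := fun q hq =>
    bundleGain_topUp_le hc hk.le hinj ht hmono hx hy hσ hbest htA htB hAF hBF hq (hσne q hq)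
  refine ⟨topUp xhat σ, topUp yhat σ, linksOf σ,
    nashEq_linksOf hconc.concaveOn ht hx hy hσ hσF hbest hout, ?_⟩
  rintro i ⟨p, hp⟩ j
  have hi : i ∈ F := mem_of_mem_erase (hσ p (by simpa [linksOf] using hp))
  simp [linksOf, hσF i hi]

/-- if `k` is at most the largest gain `k̃` from any single link
at the isolation profile, an independent Nash equilibrium exists (no large
contributor sponsors any link). -/
theorem statement11 {n : ℕ} (hn : 3 ≤ n)
    (t : Fin n → ℝ) (hT : TypeAssumptions t)
    (f : ℝ → ℝ) (c k : ℝ) (hc : 0 < c) (hk : 0 < k)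
    (hB : BenefitAssumptions f c)
    (xhat yhat : Fin n → ℝ)
    (hdem : ∀ i, IsIsolationDemand f c (t i) (xhat i) (yhat i))
    (ktilde : ℝ)
    (hub : ∀ i j : Fin n, i ≠ j →
      linkGain f c (t i) (xhat i) (yhat i) (xhat j) (yhat j) ≤ ktilde)
    (hatt : ∃ i j : Fin n, i ≠ j ∧
      linkGain f c (t i) (xhat i) (yhat i) (xhat j) (yhat j) = ktilde)
    (hkk : k ≤ ktilde) :
    ∃ (x y : Fin n → ℝ) (g : Fin n → Fin n → Bool),
      NashEq t f c k x y g ∧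
      ∀ i, isContributor g i → ∀ j, g i j = false :=
  statement11_general t hT f c k hc hk hB xhat yhat hdem
end
end

section
/- In any collaborative Nash equilibrium, i.e., a Nash equilibrium s* = (x*, y*, g*) with C(g*) = {i, j}, t_i > t_j, and g*_{ij} = g*_{ji} = 1, the two large contributors fully specialize at their isolation demands of their preferred goods: (x*_i, y*_i) = (x̂_i, 0) and (x*_j, y*_j) = (0, ŷ_j). -/
open Filter

noncomputable section

open Set

private lemma foc_up {f : ℝ → ℝ} {X d τ c : ℝ} (hd : HasDerivAt f d X)
    (h : ∀ z, X < z → τ * (f z - f X) ≤ c * (z - X)) : τ * d ≤ c := by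
  have hs : Tendsto (slope f X) (nhdsWithin X (Ioi X)) (nhds d) :=
    (hasDerivAt_iff_tendsto_slope.mp hd).mono_left
      (nhdsWithin_mono _ (fun z hz => ne_of_gt hz))
  refine le_of_tendsto (hs.const_mul τ) ?_
  filter_upwards [self_mem_nhdsWithin] with z hz
  have hzX : (0:ℝ) < z - X := sub_pos.mpr hz
  rw [slope_def_field, ← mul_div_assoc, div_le_iff₀ hzX]
  calc τ * (f z - f X) ≤ c * (z - X) := h z hz
    _ = c * (z - X) := rfl

private lemma foc_down {f : ℝ → ℝ} {X d τ c a : ℝ} (hd : HasDerivAt f d X) (haX : a < X)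
    (h : ∀ z, a < z → z < X → c * (X - z) ≤ τ * (f X - f z)) : c ≤ τ * d := by
  have hs : Tendsto (slope f X) (nhdsWithin X (Iio X)) (nhds d) :=
    (hasDerivAt_iff_tendsto_slope.mp hd).mono_left
      (nhdsWithin_mono _ (fun z hz => ne_of_lt hz))
  refine ge_of_tendsto (hs.const_mul τ) ?_
  filter_upwards [Ioo_mem_nhdsLT_of_mem ⟨haX, le_refl X⟩] with z hz
  have hzX : (0:ℝ) < X - z := sub_pos.mpr hz.2
  have hslope : slope f X z = (f X - f z) / (X - z) := by
    rw [slope_def_field, ← neg_sub (f X) (f z), ← neg_sub X z, neg_div_neg_eq]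
  rw [hslope, ← mul_div_assoc, le_div_iff₀ hzX]
  linarith [h z hz.1 hz.2]

private lemma deriv_pos_of_concave {f : ℝ → ℝ} {X d : ℝ}
    (hmono : StrictMonoOn f (Ici 0)) (hconc : StrictConcaveOn ℝ (Ici 0) f)
    (hd : HasDerivAt f d X) (hX : 0 < X) : 0 < d := by
  have h2X : f X < f (2 * X) := hmono (mem_Ici.mpr (le_of_lt hX)) (mem_Ici.mpr (by linarith)) (by linarith)
  set s0 : ℝ := (f (2 * X) - f X) / (2 * X - X) with hs0def
  have hs0 : 0 < s0 := div_pos (by linarith) (by linarith)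
  have hs : Tendsto (slope f X) (nhdsWithin X (Iio X)) (nhds d) :=
    (hasDerivAt_iff_tendsto_slope.mp hd).mono_left
      (nhdsWithin_mono _ (fun z hz => ne_of_lt hz))
  have hle : s0 ≤ d := by
    refine ge_of_tendsto hs ?_
    filter_upwards [Ioo_mem_nhdsLT_of_mem ⟨hX, le_refl X⟩] with z hz
    have hslope : slope f X z = (f X - f z) / (X - z) := by
      rw [slope_def_field, ← neg_sub (f X) (f z), ← neg_sub X z, neg_div_neg_eq]
    rw [hslope]
    exact hconc.concaveOn.slope_anti_adjacent (le_of_lt hz.1 : z ∈ Ici (0:ℝ))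
      (by simp only [mem_Ici]; linarith : (2*X) ∈ Ici (0:ℝ)) hz.2 (by linarith)
  linarith

/-- in a collaborative equilibrium the two large contributors
fully specialize at their isolation demands of their preferred goods. -/
theorem statement13 {n : ℕ} (hn : 3 ≤ n)
    (t : Fin n → ℝ) (hT : TypeAssumptions t)
    (f : ℝ → ℝ) (c k : ℝ) (hc : 0 < c) (hk : 0 < k)
    (hB : BenefitAssumptions f c)
    (x y : Fin n → ℝ) (g : Fin n → Fin n → Bool)
    (hNE : NashEq t f c k x y g)
    (i j : Fin n) (hij : i ≠ j)
    (hi : isContributor g i) (hj : isContributor g j)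
    (hall : ∀ l, isContributor g l → l = i ∨ l = j)
    (horder : t j < t i)
    (hgij : g i j = true) (hgji : g j i = true)
    (xhi yhi xhj yhj : ℝ)
    (hdi : IsIsolationDemand f c (t i) xhi yhi)
    (hdj : IsIsolationDemand f c (t j) xhj yhj) :
    x i = xhi ∧ y i = 0 ∧ x j = 0 ∧ y j = yhj := by

  obtain ⟨hx0, hy0, hgd, hbest⟩ := hNE
  obtain ⟨hf2, hmono, hconc, -, -⟩ := hB
  obtain ⟨-, ht01, -, -⟩ := hT
  have htj0 : 0 ≤ t j := (ht01 j).1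
  have hti1 : t i ≤ 1 := (ht01 i).2
  have hti0 : 0 < t i := lt_of_le_of_lt htj0 horder
  have htj1 : 0 < 1 - t j := by linarith
  have hrow_i : ∀ m, g i m = true → m = j := by
    intro m hm
    rcases hall m ⟨i, hm⟩ with h | h
    · exfalso; rw [h] at hm; rw [hgd i] at hm; exact Bool.false_ne_true hm
    · exact h
  have hrow_j : ∀ m, g j m = true → m = i := by
    intro m hm
    rcases hall m ⟨j, hm⟩ with h | h
    · exact h
    · exfalso; rw [h] at hm; rw [hgd j] at hm; exact Bool.false_ne_true hm
  have hspill_i : ∀ v : Fin n → ℝ, spill v g i = v j := by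
    intro v
    unfold spill
    have key : ∀ m : Fin n, (if g i m then v m else 0) = (if m = j then v m else 0) := by
      intro m
      by_cases hm : m = j
      · subst hm; simp [hgij]
      · have hgm : g i m = false := by
          cases hgm : g i m
          · rfl
          · exact absurd (hrow_i m hgm) hm
        simp [hgm, hm]
    calc (∑ m, if g i m then v m else 0) = ∑ m, (if m = j then v m else 0) :=
          Finset.sum_congr rfl (fun m _ => key m)
      _ = v j := by rw [Finset.sum_ite_eq' Finset.univ j v]; simp
  have hspill_j : ∀ v : Fin n → ℝ, spill v g j = v i := by
    intro v
    unfold spill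
    have key : ∀ m : Fin n, (if g j m then v m else 0) = (if m = i then v m else 0) := by
      intro m
      by_cases hm : m = i
      · subst hm; simp [hgji]
      · have hgm : g j m = false := by
          cases hgm : g j m
          · rfl
          · exact absurd (hrow_j m hgm) hm
        simp [hgm, hm]
    calc (∑ m, if g j m then v m else 0) = ∑ m, (if m = i then v m else 0) :=
          Finset.sum_congr rfl (fun m _ => key m)
      _ = v i := by rw [Finset.sum_ite_eq' Finset.univ i v]; simp
  have hupd : ∀ a, updLinks g a (g a) = g := by
    intro a; funext p q; unfold updLinks
    by_cases h : p = a
    · simp [h]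
    · simp [h]
  have Hi : ∀ x' y' : ℝ, 0 ≤ x' → 0 ≤ y' →
      t i * f (x' + x j) + (1 - t i) * f (y' + y j) - c * (x' + y')
        ≤ t i * f (x i + x j) + (1 - t i) * f (y i + y j) - c * (x i + y i) := by
    intro x' y' hx' hy'
    have h := hbest i x' y' (g i) hx' hy' (hgd i)
    rw [hupd i] at h
    unfold payoff at h
    simp only [hspill_i, Function.update_self, Function.update_of_ne (Ne.symm hij)] at h
    linarith
  have Hj : ∀ x' y' : ℝ, 0 ≤ x' → 0 ≤ y' →
      t j * f (x' + x i) + (1 - t j) * f (y' + y i) - c * (x' + y')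
        ≤ t j * f (x j + x i) + (1 - t j) * f (y j + y i) - c * (x j + y j) := by
    intro x' y' hx' hy'
    have h := hbest j x' y' (g j) hx' hy' (hgd j)
    rw [hupd j] at h
    unfold payoff at h
    simp only [hspill_j, Function.update_self, Function.update_of_ne hij] at h
    linarith
  have hdiffAt : ∀ X : ℝ, 0 < X → HasDerivAt f (deriv f X) X := by
    intro X hX
    exact ((hf2.differentiableOn (by norm_num)).differentiableAt
      (Ici_mem_nhds hX)).hasDerivAt
  -- Step 1 : x j = 0
  have hxj : x j = 0 := by
    by_contra hne
    have hxj' : 0 < x j := lt_of_le_of_ne (hx0 j) (Ne.symm hne)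
    set X := x i + x j with hX
    have hXpos : 0 < X := add_pos_of_nonneg_of_pos (hx0 i) hxj'
    have hdiff := hdiffAt X hXpos
    have hup : t i * deriv f X ≤ c := by
      refine foc_up hdiff (fun z hz => ?_)
      have h := Hi (x i + (z - X)) (y i) (by linarith [hx0 i]) (hy0 i)
      have e : x i + (z - X) + x j = z := by rw [hX]; ring
      rw [e] at h
      linarith
    have hlo : c ≤ t j * deriv f X := by
      refine foc_down hdiff (show x i < X by linarith) (fun z hz1 hz2 => ?_)
      have h := Hj (z - x i) (y j) (by linarith [hx0 i]) (hy0 j)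
      have e : z - x i + x i = z := by ring
      have e2 : x j + x i = X := by rw [hX]; ring
      rw [e, e2] at h
      rw [hX] at h ⊢
      linarith
    have hdp : 0 < deriv f X := deriv_pos_of_concave hmono hconc hdiff hXpos
    nlinarith [mul_pos (sub_pos.mpr horder) hdp]
  -- Step 2 : y i = 0
  have hyi : y i = 0 := by
    by_contra hne
    have hyi' : 0 < y i := lt_of_le_of_ne (hy0 i) (Ne.symm hne)
    set Y := y j + y i with hY
    have hYpos : 0 < Y := add_pos_of_nonneg_of_pos (hy0 j) hyi'
    have hdiff := hdiffAt Y hYpos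
    have hup : (1 - t j) * deriv f Y ≤ c := by
      refine foc_up hdiff (fun z hz => ?_)
      have h := Hj (x j) (y j + (z - Y)) (hx0 j) (by linarith [hy0 j])
      have e : y j + (z - Y) + y i = z := by rw [hY]; ring
      rw [e] at h
      linarith
    have hlo : c ≤ (1 - t i) * deriv f Y := by
      refine foc_down hdiff (show y j < Y by linarith) (fun z hz1 hz2 => ?_)
      have h := Hi (x i) (z - y j) (hx0 i) (by linarith [hy0 j])
      have e : z - y j + y j = z := by ring
      have e2 : y i + y j = Y := by rw [hY]; ring
      rw [e, e2] at h
      rw [hY] at h ⊢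
      linarith
    have hdp : 0 < deriv f Y := deriv_pos_of_concave hmono hconc hdiff hYpos
    nlinarith [mul_pos (sub_pos.mpr horder) hdp]
  -- Step 3 : x i = xhi
  have hXieq : x i = xhi := by
    have hA : ∀ z, 0 ≤ z → t i * f z - c * z ≤ t i * f (x i) - c * x i := by
      intro z hz
      have h := Hi z (y i) hz (hy0 i)
      rw [hxj] at h
      simp only [add_zero] at h
      linarith
    have hBx : ∀ z, 0 ≤ z → t i * f z - c * z ≤ t i * f xhi - c * xhi := by
      intro z hz
      have h := hdi.2.2 z yhi hz hdi.2.1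
      linarith
    by_contra hne
    have h1 := hA xhi hdi.1
    have h2 := hBx (x i) (hx0 i)
    have heqv : t i * f (x i) - c * x i = t i * f xhi - c * xhi := le_antisymm h2 h1
    have hmid := hconc.2 (mem_Ici.mpr (hx0 i)) (mem_Ici.mpr hdi.1) hne
      (by norm_num : (0:ℝ) < 1/2) (by norm_num : (0:ℝ) < 1/2) (by norm_num)
    simp only [smul_eq_mul] at hmid
    have h3 := hA (1/2 * x i + 1/2 * xhi) (by linarith [hx0 i, hdi.1])
    nlinarith [mul_lt_mul_of_pos_left hmid hti0]
  -- Step 4 : y j = yhj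
  have hYjeq : y j = yhj := by
    have hA : ∀ z, 0 ≤ z → (1 - t j) * f z - c * z ≤ (1 - t j) * f (y j) - c * y j := by
      intro z hz
      have h := Hj (x j) z (hx0 j) hz
      rw [hyi] at h
      simp only [add_zero] at h
      linarith
    have hBy : ∀ z, 0 ≤ z → (1 - t j) * f z - c * z ≤ (1 - t j) * f yhj - c * yhj := by
      intro z hz
      have h := hdj.2.2 xhj z hdj.1 hz
      linarith
    by_contra hne
    have h1 := hA yhj hdj.2.1
    have h2 := hBy (y j) (hy0 j)
    have heqv : (1 - t j) * f (y j) - c * y j = (1 - t j) * f yhj - c * yhj :=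
      le_antisymm h2 h1
    have hmid := hconc.2 (mem_Ici.mpr (hy0 j)) (mem_Ici.mpr hdj.2.1) hne
      (by norm_num : (0:ℝ) < 1/2) (by norm_num : (0:ℝ) < 1/2) (by norm_num)
    simp only [smul_eq_mul] at hmid
    have h3 := hA (1/2 * y j + 1/2 * yhj) (by linarith [hy0 j, hdj.2.1])
    nlinarith [mul_lt_mul_of_pos_left hmid htj1]
  exact ⟨hXieq, hyi, hxj, hYjeq⟩
end
end

section
/- In any partially collaborative Nash equilibrium, i.e., a Nash equilibrium s* = (x*, y*, g*) with C(g*) = {i, j}, t_i > t_j, g*_{ji} = 1 and g*_{ij} = 0, the equilibrium contributions of the large contributors are (x*_i, y*_i) = (x̂_i, ŷ_i) and (x*_j, y*_j) = (0, ŷ_j − ŷ_i); in particular ŷ_j ≥ ŷ_i. -/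
/-!
A player's payoff separates into one net gain `s·f(w + a) − c·w` per good, where `s` is her
weight on the good and `a` the spillover she receives; in equilibrium each own contribution
maximises its net gain over `w ≥ 0`, and by strict concavity the maximiser is unique.
Player `i` sponsors no link, so she receives nothing and plays her isolation demand; player `j`
links only to `i` and so receives exactly `(x̂_i, ŷ_i)`. As `t_j < t_i`, revealed preference gives
`x̂_j ≤ x̂_i` and `ŷ_i ≤ ŷ_j`: the spillover `x̂_i` already exceeds what `j` wants of `x`, so she
contributes nothing to it, while in `y` she tops `ŷ_i` up to `ŷ_j`.
-/

open Filter

noncomputable section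

open Set

def netGain (f : ℝ → ℝ) (c s a w : ℝ) : ℝ :=
  s * f (w + a) - c * w

section NetGain

variable {f : ℝ → ℝ} {c s a : ℝ}

lemma netGain_combo_sub (α β u v : ℝ) (hαβ : α + β = 1) :
    netGain f c s a (α * u + β * v) - (α * netGain f c s a u + β * netGain f c s a v) =
      s * (f (α * (u + a) + β * (v + a)) - (α * f (u + a) + β * f (v + a))) := by
  have hshift : α * u + β * v + a = α * (u + a) + β * (v + a) := by
    linear_combination -a * hαβ
  simp only [netGain, hshift]
  ring

lemma concaveOn_netGain (hf : ConcaveOn ℝ (Ici 0) f) (hs : 0 ≤ s) (ha : 0 ≤ a) :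
    ConcaveOn ℝ (Ici 0) (netGain f c s a) := by
  refine ⟨convex_Ici 0, fun u hu v hv α β hα hβ hαβ => ?_⟩
  have hf' := hf.2 (mem_Ici.2 (add_nonneg hu ha)) (mem_Ici.2 (add_nonneg hv ha)) hα hβ hαβ
  simp only [smul_eq_mul] at hf' ⊢
  nlinarith [netGain_combo_sub (f := f) (c := c) (s := s) (a := a) α β u v hαβ,
    mul_nonneg hs (sub_nonneg.2 hf')]

lemma strictConcaveOn_netGain (hf : StrictConcaveOn ℝ (Ici 0) f) (hs : 0 < s) (ha : 0 ≤ a) :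
    StrictConcaveOn ℝ (Ici 0) (netGain f c s a) := by
  refine ⟨convex_Ici 0, fun u hu v hv huv α β hα hβ hαβ => ?_⟩
  have hf' := hf.2 (mem_Ici.2 (add_nonneg hu ha)) (mem_Ici.2 (add_nonneg hv ha))
    (by simpa using huv) hα hβ hαβ
  simp only [smul_eq_mul] at hf' ⊢
  nlinarith [netGain_combo_sub (f := f) (c := c) (s := s) (a := a) α β u v hαβ,
    mul_pos hs (sub_pos.2 hf')]

/-- For `s = 0` the net gain `−c·w` is not strictly concave, but `c > 0` still makes `0` its
only maximiser. -/
lemma StrictConcaveOn.eq_of_isMaxOn_netGain (hf : StrictConcaveOn ℝ (Ici 0) f) (hs : 0 ≤ s)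
    (hc : 0 < c) (ha : 0 ≤ a) {w₁ w₂ : ℝ} (hw₁ : 0 ≤ w₁) (hw₂ : 0 ≤ w₂)
    (h₁ : IsMaxOn (netGain f c s a) (Ici 0) w₁) (h₂ : IsMaxOn (netGain f c s a) (Ici 0) w₂) :
    w₁ = w₂ := by
  rcases hs.eq_or_lt with rfl | hs
  · have e₁ : -(c * 0) ≤ -(c * w₁) := by simpa [netGain] using isMaxOn_iff.1 h₁ 0 self_mem_Ici
    have e₂ : -(c * 0) ≤ -(c * w₂) := by simpa [netGain] using isMaxOn_iff.1 h₂ 0 self_mem_Ici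
    nlinarith
  · exact (strictConcaveOn_netGain hf hs ha).eq_of_isMaxOn h₁ h₂ hw₁ hw₂

/-- `netGain f c s a w = netGain f c s 0 (w + a) + c·a`, and the concave `netGain f c s 0` is
antitone beyond its maximiser `z ≤ a`. -/
lemma isMaxOn_netGain_zero_of_le (hf : ConcaveOn ℝ (Ici 0) f) (hs : 0 ≤ s) {z : ℝ}
    (hz : 0 ≤ z) (hmax : IsMaxOn (netGain f c s 0) (Ici 0) z) (hza : z ≤ a) :
    IsMaxOn (netGain f c s a) (Ici 0) 0 := by
  refine isMaxOn_iff.2 fun w hw => ?_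
  have hw : 0 ≤ w := hw
  have key : netGain f c s 0 (w + a) ≤ netGain f c s 0 a := by
    rcases hza.eq_or_lt with rfl | hza
    · exact isMaxOn_iff.1 hmax _ (mem_Ici.2 (by linarith))
    · exact (concaveOn_netGain hf hs le_rfl).right_le_of_le_left'' (mem_Ici.2 hz)
        (mem_Ici.2 (by linarith)) hza (by linarith)
        (isMaxOn_iff.1 hmax _ (mem_Ici.2 (by linarith)))
  simp only [netGain, add_zero, zero_add, mul_zero, sub_zero] at key ⊢
  linarith

lemma isMaxOn_netGain_sub {z : ℝ} (hmax : IsMaxOn (netGain f c s 0) (Ici 0) z) (ha : 0 ≤ a) :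
    IsMaxOn (netGain f c s a) (Ici 0) (z - a) := by
  refine isMaxOn_iff.2 fun w hw => ?_
  have key := isMaxOn_iff.1 hmax _ (add_nonneg (mem_Ici.1 hw) ha)
  simp only [netGain, add_zero, sub_add_cancel] at key ⊢
  linarith

/-- Revealed preference: a larger weight on a good never lowers the stand-alone demand. -/
lemma StrictMonoOn.le_of_isMaxOn_netGain (hf : StrictMonoOn f (Ici 0)) {s' z z' : ℝ}
    (hs : s' < s) (hz : 0 ≤ z) (hz' : 0 ≤ z') (hmax : IsMaxOn (netGain f c s 0) (Ici 0) z)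
    (hmax' : IsMaxOn (netGain f c s' 0) (Ici 0) z') : z' ≤ z := by
  have e := isMaxOn_iff.1 hmax _ hz'
  have e' := isMaxOn_iff.1 hmax' _ hz
  simp only [netGain, add_zero] at e e'
  refine (hf.le_iff_le (mem_Ici.2 hz') (mem_Ici.2 hz)).1 ?_
  nlinarith

end NetGain

lemma IsIsolationDemand.isMaxOn_fst {f : ℝ → ℝ} {c t x y : ℝ}
    (h : IsIsolationDemand f c t x y) : IsMaxOn (netGain f c t 0) (Ici 0) x := by
  refine isMaxOn_iff.2 fun w hw => ?_
  have := h.2.2 w y hw h.2.1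
  simp only [netGain, add_zero]
  linarith

lemma IsIsolationDemand.isMaxOn_snd {f : ℝ → ℝ} {c t x y : ℝ}
    (h : IsIsolationDemand f c t x y) : IsMaxOn (netGain f c (1 - t) 0) (Ici 0) y := by
  refine isMaxOn_iff.2 fun w hw => ?_
  have := h.2.2 x w h.1 hw
  simp only [netGain, add_zero]
  linarith

section Game

variable {n : ℕ} {t : Fin n → ℝ} {f : ℝ → ℝ} {c k : ℝ} {x y : Fin n → ℝ}
  {g : Fin n → Fin n → Bool}

lemma spill_eq_zero {i : Fin n} (hg : ∀ l, g i l = false) (w : Fin n → ℝ) :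
    spill w g i = 0 := by
  simp [spill, hg]

lemma spill_eq_of_unique_link {i j : Fin n} (hji : g j i = true) (hg : ∀ l, g j l = true → l = i)
    (w : Fin n → ℝ) : spill w g j = w i := by
  rw [spill, Finset.sum_eq_single i (fun l _ hl => by simp [mt (hg l) hl]) (by simp), hji,
    if_pos rfl]

lemma spill_update_self_s14 {p : Fin n} (hp : g p p = false) (w : Fin n → ℝ) (v : ℝ) :
    spill (Function.update w p v) g p = spill w g p :=
  Finset.sum_congr rfl fun l _ => by
    rcases eq_or_ne l p with rfl | hl
    · simp [hp]
    · rw [Function.update_of_ne hl]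

lemma updLinks_self_s14 (p : Fin n) : updLinks g p (g p) = g := by
  funext a b
  by_cases h : a = p <;> simp [updLinks, h]

lemma payoff_eq_netGain (p : Fin n) :
    payoff t f c k x y g p = netGain f c (t p) (spill x g p) (x p)
      + netGain f c (1 - t p) (spill y g p) (y p) - nlinks g p * k := by
  simp only [payoff, netGain]
  ring

lemma NashEq.netGain_add_le (hNE : NashEq t f c k x y g) (p : Fin n) {x' y' : ℝ}
    (hx' : 0 ≤ x') (hy' : 0 ≤ y') :
    netGain f c (t p) (spill x g p) x' + netGain f c (1 - t p) (spill y g p) y'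
      ≤ netGain f c (t p) (spill x g p) (x p) + netGain f c (1 - t p) (spill y g p) (y p) := by
  have hself := hNE.2.2.1 p
  have h := hNE.2.2.2 p x' y' (g p) hx' hy' hself
  rw [updLinks_self_s14, payoff_eq_netGain, payoff_eq_netGain, spill_update_self_s14 hself,
    spill_update_self_s14 hself, Function.update_self, Function.update_self] at h
  linarith

lemma NashEq.isMaxOn_fst (hNE : NashEq t f c k x y g) (p : Fin n) :
    IsMaxOn (netGain f c (t p) (spill x g p)) (Ici 0) (x p) :=
  isMaxOn_iff.2 fun _ hw => by linarith [hNE.netGain_add_le p (mem_Ici.1 hw) (hNE.2.1 p)]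

lemma NashEq.isMaxOn_snd (hNE : NashEq t f c k x y g) (p : Fin n) :
    IsMaxOn (netGain f c (1 - t p) (spill y g p)) (Ici 0) (y p) :=
  isMaxOn_iff.2 fun _ hw => by linarith [hNE.netGain_add_le p (hNE.1 p) (mem_Ici.1 hw)]

end Game

theorem statement14_general {n : ℕ}
    (t : Fin n → ℝ) (hT : TypeAssumptions t)
    (f : ℝ → ℝ) (c k : ℝ) (hc : 0 < c)
    (hB : BenefitAssumptions f c)
    (x y : Fin n → ℝ) (g : Fin n → Fin n → Bool)
    (hNE : NashEq t f c k x y g)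
    (i j : Fin n)
    (hall : ∀ l, isContributor g l → l = i ∨ l = j)
    (horder : t j < t i)
    (hgji : g j i = true) (hgij : g i j = false)
    (xhi yhi xhj yhj : ℝ)
    (hdi : IsIsolationDemand f c (t i) xhi yhi)
    (hdj : IsIsolationDemand f c (t j) xhj yhj) :
    x i = xhi ∧ y i = yhi ∧ x j = 0 ∧ y j = yhj - yhi ∧ yhi ≤ yhj := by
  obtain ⟨-, hmono, hsc, -⟩ := hB
  obtain ⟨hti0, hti1⟩ := hT.2.1 i
  obtain ⟨htj0, htj1⟩ := hT.2.1 j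
  have hself := hNE.2.2.1
  have hgi : ∀ l, g i l = false := fun l => by
    by_contra h
    rcases hall l ⟨i, by simpa using h⟩ with rfl | rfl <;> simp_all
  have hgj : ∀ l, g j l = true → l = i := fun l h => by
    rcases hall l ⟨j, h⟩ with rfl | rfl
    · rfl
    · simp_all
  have hxi : x i = xhi := hsc.eq_of_isMaxOn_netGain hti0 hc le_rfl (hNE.1 i) hdi.1
    (by simpa only [spill_eq_zero hgi] using hNE.isMaxOn_fst i) hdi.isMaxOn_fst
  have hyi : y i = yhi := hsc.eq_of_isMaxOn_netGain (sub_nonneg.2 hti1) hc le_rfl (hNE.2.1 i)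
    hdi.2.1 (by simpa only [spill_eq_zero hgi] using hNE.isMaxOn_snd i) hdi.isMaxOn_snd
  have hxx : xhj ≤ xhi :=
    hmono.le_of_isMaxOn_netGain horder hdi.1 hdj.1 hdi.isMaxOn_fst hdj.isMaxOn_fst
  have hyy : yhi ≤ yhj := hmono.le_of_isMaxOn_netGain (by linarith) hdj.2.1 hdi.2.1
    hdj.isMaxOn_snd hdi.isMaxOn_snd
  have hxj : x j = 0 := hsc.eq_of_isMaxOn_netGain htj0 hc hdi.1 (hNE.1 j) le_rfl
    (by simpa only [spill_eq_of_unique_link hgji hgj, hxi] using hNE.isMaxOn_fst j)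
    (isMaxOn_netGain_zero_of_le hsc.concaveOn htj0 hdj.1 hdj.isMaxOn_fst hxx)
  have hyj : y j = yhj - yhi := hsc.eq_of_isMaxOn_netGain (sub_nonneg.2 htj1) hc hdi.2.1
    (hNE.2.1 j) (by linarith)
    (by simpa only [spill_eq_of_unique_link hgji hgj, hyi] using hNE.isMaxOn_snd j)
    (isMaxOn_netGain_sub hdj.isMaxOn_snd hdi.2.1)
  exact ⟨hxi, hyi, hxj, hyj, hyy⟩

/-- in a partially collaborative equilibrium, the non-linking
large contributor provides her isolation bundle, while the other specializes in
`y`, topping up to her isolation demand; in particular `ŷ_j ≥ ŷ_i`. -/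
theorem statement14 {n : ℕ} (hn : 3 ≤ n)
    (t : Fin n → ℝ) (hT : TypeAssumptions t)
    (f : ℝ → ℝ) (c k : ℝ) (hc : 0 < c) (hk : 0 < k)
    (hB : BenefitAssumptions f c)
    (x y : Fin n → ℝ) (g : Fin n → Fin n → Bool)
    (hNE : NashEq t f c k x y g)
    (i j : Fin n) (hij : i ≠ j)
    (hi : isContributor g i) (hj : isContributor g j)
    (hall : ∀ l, isContributor g l → l = i ∨ l = j)
    (horder : t j < t i)
    (hgji : g j i = true) (hgij : g i j = false)
    (xhi yhi xhj yhj : ℝ)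
    (hdi : IsIsolationDemand f c (t i) xhi yhi)
    (hdj : IsIsolationDemand f c (t j) xhj yhj) :
    x i = xhi ∧ y i = yhi ∧ x j = 0 ∧ y j = yhj - yhi ∧ yhi ≤ yhj :=
  statement14_general t hT f c k hc hB x y g hNE i j hall horder hgji hgij xhi yhi xhj yhj hdi hdj
end
end
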